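/- arXiv:1504.03782 — 10 statements merged into one kernel-verified Lean document; each statement's English description precedes it below -/
import Mathlib

section
/- The (i,j) entry of the product of whirls M(x_1)M(x_2)⋯M(x_m) equals the loop elementary symmetric function e_{j-i}^{(i)}, which has the explicit formula e_k^{(r)}(x_1,...,x_m) = Σ x_{i_1}^{(r)} x_{i_2}^{(r+1)} ⋯ x_{i_k}^{(r+k-1)}, the sum over strictly increasing sequences 1 ≤ i_1 < i_2 < ⋯ < i_k ≤ m. -/
open Finset

/-- Multiplication of (upper-triangular) N-by-N matrices: for upper triangular
matrices this agrees with true matrix multiplication. -/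
def utMul {K : Type*} [Field K] (A B : Matrix ℕ ℕ K) : Matrix ℕ ℕ K :=
  Matrix.of fun i j => ∑ t ∈ Finset.Icc i j, A i t * B t j

/-- The identity infinite matrix. -/
def oneM {K : Type*} [Field K] : Matrix ℕ ℕ K := Matrix.of fun i j => if i = j then 1 else 0

/-- Checkerboard conjugate `A^c` of an infinite matrix. -/
def chkInf {K : Type*} [Field K] (A : Matrix ℕ ℕ K) : Matrix ℕ ℕ K :=
  Matrix.of fun i j => (-1 : K) ^ (i + j) * A i j

/-- The whirl `M(a_1, …, a_n)`: upper bitriangular with 1's on the diagonal and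
`a_i` (index mod `n`) on the superdiagonal. -/
def whirl {K : Type*} [Field K] (n : ℕ) (a : ZMod n → K) : Matrix ℕ ℕ K :=
  Matrix.of fun i j => if j = i then 1 else if j = i + 1 then a (i : ZMod n) else 0

/-- `κ^{(r)}(x,y) = Σ_{j=0}^{n-1} y^{(r+1)}⋯y^{(r+j)} x^{(r+j+1)}⋯x^{(r+n-1)}`. -/
def kappa {K : Type*} [Field K] (n : ℕ) (xx yy : ZMod n → K) (r : ZMod n) : K :=
  ∑ j ∈ Finset.range n,
    (∏ t ∈ Finset.Icc 1 j, yy (r + (t : ZMod n))) *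
      ∏ t ∈ Finset.Icc (j + 1) (n - 1), xx (r + (t : ZMod n))

/-- Loop elementary symmetric function
`e_k^{(r)} = Σ_{i_1 < ⋯ < i_k} x_{i_1}^{(r)} x_{i_2}^{(r+1)} ⋯ x_{i_k}^{(r+k-1)}`. -/
def loopE {K : Type*} [Field K] (m n : ℕ) (x : Fin m → ZMod n → K) (k : ℕ) (r : ZMod n) : K :=
  ∑ f ∈ Finset.univ.filter (fun f : Fin k → Fin m => ∀ a b : Fin k, a < b → f a < f b),
    ∏ t : Fin k, x (f t) (r + ((t : ℕ) : ZMod n))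

/-- Loop homogeneous symmetric function
`h_k^{(r)} = Σ_{i_k ≥ ⋯ ≥ i_1} x_{i_k}^{(r)} x_{i_{k-1}}^{(r+1)} ⋯ x_{i_1}^{(r+k-1)}`,
encoded via the weakly increasing sequence `f = (i_1, …, i_k)`. -/
def loopH {K : Type*} [Field K] (m n : ℕ) (x : Fin m → ZMod n → K) (k : ℕ) (r : ZMod n) : K :=
  ∑ f ∈ Finset.univ.filter (fun f : Fin k → Fin m => ∀ a b : Fin k, a ≤ b → f a ≤ f b),
    ∏ t : Fin k, x (f t) (r + ((k - 1 - (t : ℕ) : ℕ) : ZMod n))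

/-- Loop homogeneous symmetric function with integer index, `0` for negative index. -/
noncomputable def loopHZ {K : Type*} [Field K] (m n : ℕ) (x : Fin m → ZMod n → K)
    (k : ℤ) (r : ZMod n) : K :=
  if k < 0 then 0 else loopH m n x k.toNat r

/-- Single-block loop homogeneous function `h_a^{(b)}(y) = y^{(b+a-1)} y^{(b+a-2)} ⋯ y^{(b)}`. -/
def singleH {K : Type*} [Field K] (n : ℕ) (y : ZMod n → K) (a : ℕ) (b : ZMod n) : K :=
  ∏ s ∈ Finset.range a, y (b + (s : ZMod n))

/-- `π = y^{(1)} y^{(2)} ⋯ y^{(n)}`, the product over all colors of one block. -/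
def pivar {K : Type*} [Field K] (n : ℕ) [NeZero n] (y : ZMod n → K) : K := ∏ j : ZMod n, y j

/-- The product of whirls `M(x_1) M(x_2) ⋯ M(x_m)`. -/
noncomputable def whirlProd {K : Type*} [Field K] (m n : ℕ) (x : Fin m → ZMod n → K) :
    Matrix ℕ ℕ K :=
  (List.ofFn fun i : Fin m => whirl n (x i)).foldr utMul oneM

/-!
Left multiplication by the whirl `M(x_1)` replaces row `i` of a matrix by row `i` plus
`x_1^{(i)}` times row `i + 1`. On the combinatorial side, a strictly increasing sequence
`i_1 < ⋯ < i_{k+1}` in `{1, …, m+1}` either avoids `1` or starts with `i_1 = 1`, which gives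
`e_{k+1}^{(r)}(x_1, …, x_{m+1})`
  `= e_{k+1}^{(r)}(x_2, …, x_{m+1}) + x_1^{(r)} e_k^{(r+1)}(x_2, …, x_{m+1})`.
The two recursions agree, so the theorem follows by induction on `m`.
-/

lemma strictMono_succ_comp_iff {k m : ℕ} {g : Fin k → Fin m} :
    StrictMono (Fin.succ ∘ g) ↔ StrictMono g :=
  ⟨fun h _ _ hab => Fin.succ_lt_succ_iff.mp (h hab), Fin.strictMono_succ.comp⟩

lemma exists_strictMono_succ_comp_eq {k m : ℕ} {f : Fin k → Fin (m + 1)} (hf : StrictMono f)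
    (hf0 : ∀ t, f t ≠ 0) : ∃ g, StrictMono g ∧ Fin.succ ∘ g = f := by
  have hg : Fin.succ ∘ (fun t => (f t).pred (hf0 t)) = f := funext fun t => Fin.succ_pred _ _
  exact ⟨_, strictMono_succ_comp_iff.mp (by rwa [hg]), hg⟩

lemma sum_strictMono_filter_ne_zero {M : Type*} [AddCommMonoid M] (k m : ℕ)
    (F : (Fin (k + 1) → Fin (m + 1)) → M) :
    ∑ f with StrictMono f ∧ f 0 ≠ 0, F f =
      ∑ g : Fin (k + 1) → Fin m with StrictMono g, F (Fin.succ ∘ g) := by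
  symm
  refine sum_nbij (Fin.succ ∘ ·) ?_ ?_ ?_ (fun _ _ => rfl)
  · intro g hg
    simp only [mem_filter, mem_univ, true_and] at hg ⊢
    exact ⟨strictMono_succ_comp_iff.mpr hg, Fin.succ_ne_zero _⟩
  · exact fun g _ g' _ h => funext fun t => Fin.succ_injective _ (congrFun h t)
  · intro f hf
    simp only [mem_coe, mem_filter, mem_univ, true_and] at hf
    obtain ⟨hf, hf0⟩ := hf
    have hne (t) : f t ≠ 0 := fun h0 =>
      hf0 (le_antisymm (h0 ▸ hf.monotone (Fin.zero_le t)) (Fin.zero_le _))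
    obtain ⟨g, hg, rfl⟩ := exists_strictMono_succ_comp_eq hf hne
    exact ⟨g, by simpa using hg, rfl⟩

lemma sum_strictMono_filter_eq_zero {M : Type*} [AddCommMonoid M] (k m : ℕ)
    (F : (Fin (k + 1) → Fin (m + 1)) → M) :
    ∑ f with StrictMono f ∧ f 0 = 0, F f =
      ∑ g : Fin k → Fin m with StrictMono g, F (Fin.cons 0 (Fin.succ ∘ g)) := by
  symm
  refine sum_nbij (fun g => Fin.cons 0 (Fin.succ ∘ g)) ?_ ?_ ?_ (fun _ _ => rfl)
  · intro g hg
    simp only [mem_filter, mem_univ, true_and] at hg ⊢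
    exact ⟨Fin.strictMono_cons.mpr ⟨fun j => Fin.succ_pos _, strictMono_succ_comp_iff.mpr hg⟩,
      rfl⟩
  · exact fun g _ g' _ h => funext fun t =>
      Fin.succ_injective _ (congrFun (Fin.cons_right_injective _ h) t)
  · intro f hf
    simp only [mem_coe, mem_filter, mem_univ, true_and] at hf
    obtain ⟨hf, hf0⟩ := hf
    rw [← Fin.cons_self_tail f, hf0] at hf ⊢
    obtain ⟨hpos, htail⟩ := Fin.strictMono_cons.mp hf
    obtain ⟨g, hg, hgf⟩ := exists_strictMono_succ_comp_eq htail fun t => (hpos t).ne'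
    exact ⟨g, by simpa using hg, congrArg _ hgf⟩

theorem sum_strictMono_fin_succ {M : Type*} [AddCommMonoid M] (k m : ℕ)
    (F : (Fin (k + 1) → Fin (m + 1)) → M) :
    ∑ f with StrictMono f, F f =
      ∑ g : Fin (k + 1) → Fin m with StrictMono g, F (Fin.succ ∘ g) +
        ∑ g : Fin k → Fin m with StrictMono g, F (Fin.cons 0 (Fin.succ ∘ g)) := by
  rw [← sum_filter_not_add_sum_filter _ (fun f => f 0 = 0), filter_filter, filter_filter,
    sum_strictMono_filter_ne_zero, sum_strictMono_filter_eq_zero]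

section loopE

variable {K : Type*} [Field K] {m n : ℕ}

lemma loopE_eq_sum_strictMono (x : Fin m → ZMod n → K) (k : ℕ) (r : ZMod n) :
    loopE m n x k r = ∑ f : Fin k → Fin m with StrictMono f, ∏ t, x (f t) (r + (t : ℕ)) :=
  rfl

@[simp]
lemma loopE_zero (x : Fin m → ZMod n → K) (r : ZMod n) : loopE m n x 0 r = 1 := by
  simp [loopE_eq_sum_strictMono, Subsingleton.strictMono]

lemma loopE_of_fin_zero (x : Fin 0 → ZMod n → K) {k : ℕ} (hk : k ≠ 0) (r : ZMod n) :
    loopE 0 n x k r = 0 := by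
  obtain ⟨k, rfl⟩ := Nat.exists_eq_succ_of_ne_zero hk
  simp [loopE_eq_sum_strictMono]

lemma loopE_succ_succ (x : Fin (m + 1) → ZMod n → K) (k : ℕ) (r : ZMod n) :
    loopE (m + 1) n x (k + 1) r =
      loopE m n (fun i => x i.succ) (k + 1) r +
        x 0 r * loopE m n (fun i => x i.succ) k (r + 1) := by
  simp only [loopE_eq_sum_strictMono, sum_strictMono_fin_succ, mul_sum, Fin.prod_univ_succ,
    Fin.cons_zero, Fin.cons_succ, Function.comp_apply, Fin.val_zero, Fin.val_succ]
  congr 1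
  refine sum_congr rfl fun g _ => ?_
  push_cast
  simp only [add_zero, add_assoc, add_comm (1 : ZMod n)]

end loopE

section whirl

variable {K : Type*} [Field K] {n : ℕ}

lemma utMul_whirl_apply_self (a : ZMod n → K) (B : Matrix ℕ ℕ K) (i : ℕ) :
    utMul (whirl n a) B i i = B i i := by
  simp [utMul, whirl]

lemma utMul_whirl_apply_of_lt (a : ZMod n → K) (B : Matrix ℕ ℕ K) {i j : ℕ} (hij : i < j) :
    utMul (whirl n a) B i j = B i j + a i * B (i + 1) j := by
  simp only [utMul, whirl, Matrix.of_apply]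
  rw [sum_eq_add i (i + 1) (by omega)]
  · simp
  · intro t _ ht
    simp [ht.1, ht.2]
  · simp [hij.le]
  · simp [hij]

lemma whirlProd_zero (x : Fin 0 → ZMod n → K) : whirlProd 0 n x = oneM := by
  simp [whirlProd]

lemma whirlProd_succ {m : ℕ} (x : Fin (m + 1) → ZMod n → K) :
    whirlProd (m + 1) n x = utMul (whirl n (x 0)) (whirlProd m n fun i => x i.succ) := by
  simp [whirlProd, List.ofFn_succ]

end whirl

theorem statement3_general {K : Type*} [Field K] (m n : ℕ) (x : Fin m → ZMod n → K) :
    ∀ i j : ℕ, i ≤ j → whirlProd m n x i j = loopE m n x (j - i) ((i : ℕ) : ZMod n) := by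
  induction m with
  | zero =>
    intro i j hij
    rcases hij.eq_or_lt with rfl | hlt
    · simp [whirlProd_zero, oneM]
    · simp [whirlProd_zero, oneM, hlt.ne, loopE_of_fin_zero, Nat.sub_ne_zero_of_lt hlt]
  | succ m ih =>
    intro i j hij
    rw [whirlProd_succ]
    rcases hij.eq_or_lt with rfl | hlt
    · simp [utMul_whirl_apply_self, ih]
    · obtain ⟨k, rfl⟩ := Nat.exists_eq_add_of_lt hlt
      rw [utMul_whirl_apply_of_lt _ _ hlt, ih _ i _ hij, ih _ (i + 1) _ (by omega),
        show i + k + 1 - i = k + 1 by omega, show i + k + 1 - (i + 1) = k by omega,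
        loopE_succ_succ, Nat.cast_add_one]

/-- The `(i,j)` entry of `M(x_1)⋯M(x_m)` is the loop elementary symmetric function
`e_{j-i}^{(i)} = Σ_{i_1 < ⋯ < i_k} x_{i_1}^{(r)} ⋯ x_{i_k}^{(r+k-1)}` with `k = j-i`, `r = i`. -/
theorem statement3 {K : Type*} [Field K] (m n : ℕ) [NeZero n] (x : Fin m → ZMod n → K) :
    ∀ i j : ℕ, i ≤ j → whirlProd m n x i j = loopE m n x (j - i) ((i : ℕ) : ZMod n) :=
  statement3_general m n x
end

section
/- The (i,j) entry of the product of curls N(x_m)N(x_{m-1})⋯N(x_1) equals the loop homogeneous symmetric function h_{j-i}^{(i)}, which has the explicit formula h_k^{(r)}(x_1,...,x_m) = Σ x_{i_k}^{(r)} x_{i_{k-1}}^{(r+1)} ⋯ x_{i_1}^{(r+k-1)}, the sum over weakly decreasing sequences m ≥ i_k ≥ i_{k-1} ≥ ⋯ ≥ i_1 ≥ 1. -/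
open Finset

section MyHelpers
variable {K : Type*} [Field K]

lemma my_loopH_zero (m n : ℕ) (x : Fin m → ZMod n → K) (r : ZMod n) : loopH m n x 0 r = 1 := by
  unfold loopH
  rw [Finset.filter_true_of_mem (fun f _ => by intro a b _; exact absurd a.2 (by omega))]
  simp

lemma my_loopH_mzero (n k : ℕ) (x : Fin 0 → ZMod n → K) (r : ZMod n) (hk : k ≠ 0) :
    loopH 0 n x k r = 0 := by
  have : IsEmpty (Fin k → Fin 0) :=
    ⟨fun f => (f ⟨0, Nat.pos_of_ne_zero hk⟩).elim0⟩
  unfold loopH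
  rw [Finset.univ_eq_empty, Finset.filter_empty, Finset.sum_empty]

lemma my_mono_lt_iff {k m : ℕ} (f : Fin k → Fin (m+1)) (hf : ∀ a b : Fin k, a ≤ b → f a ≤ f b)
    (t : Fin k) : (f t : ℕ) < m ↔ (t : ℕ) < (univ.filter fun s : Fin k => (f s : ℕ) < m).card := by
  constructor
  · intro ht
    have hsub : Finset.Iic t ⊆ univ.filter fun s : Fin k => (f s : ℕ) < m := by
      intro s hs
      simp only [Finset.mem_Iic] at hs
      simp only [Finset.mem_filter, Finset.mem_univ, true_and]
      exact lt_of_le_of_lt (show (f s : ℕ) ≤ (f t : ℕ) from hf s t hs) ht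
    have := Finset.card_le_card hsub
    rw [Fin.card_Iic] at this
    omega
  · intro ht
    by_contra hc
    have hsub : (univ.filter fun s : Fin k => (f s : ℕ) < m) ⊆ Finset.Iio t := by
      intro s hs
      simp only [Finset.mem_filter] at hs
      simp only [Finset.mem_Iio]
      by_contra hst
      push_neg at hst
      exact hc (lt_of_le_of_lt (show (f t : ℕ) ≤ (f s : ℕ) from hf t s hst) hs.2)
    have := Finset.card_le_card hsub
    rw [Fin.card_Iio] at this
    omega

lemma my_card_filter_lt {k c : ℕ} (hc : c ≤ k) :
    (univ.filter fun t : Fin k => (t : ℕ) < c).card = c := by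
  have h : (univ.filter fun t : Fin k => (t : ℕ) < c).card = (range c).card := by
    refine Finset.card_bij' (fun t _ => (t : ℕ))
      (fun s hs => (⟨s, lt_of_lt_of_le (Finset.mem_range.mp hs) hc⟩ : Fin k)) ?_ ?_ ?_ ?_
    · intro a ha
      simp only [Finset.mem_filter] at ha
      exact Finset.mem_range.mpr ha.2
    · intro a ha
      simp only [Finset.mem_filter, Finset.mem_univ, true_and]
      exact Finset.mem_range.mp ha
    · intro a ha; rfl
    · intro a ha; rfl
  rw [h, Finset.card_range]

lemma my_loopH_succ (m n k : ℕ) (x : Fin (m+1) → ZMod n → K) (r : ZMod n) :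
    loopH (m+1) n x k r
      = ∑ c ∈ range (k+1), singleH n (x (Fin.last m)) (k - c) r
          * loopH m n (fun b => x b.castSucc) c (r + ((k - c : ℕ) : ZMod n)) := by
  unfold loopH singleH
  have hmaps : ∀ f ∈ Finset.univ.filter
      (fun f : Fin k → Fin (m+1) => ∀ a b : Fin k, a ≤ b → f a ≤ f b),
      (univ.filter fun s : Fin k => (f s : ℕ) < m).card ∈ range (k+1) := by
    intro f _
    rw [Finset.mem_range]
    have := Finset.card_filter_le univ (fun s : Fin k => (f s : ℕ) < m)
    simp only [Finset.card_univ, Fintype.card_fin] at this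
    omega
  rw [← Finset.sum_fiberwise_of_maps_to hmaps]
  apply Finset.sum_congr rfl
  intro c hc
  have hck : c ≤ k := by rw [Finset.mem_range] at hc; omega
  rw [Finset.mul_sum]
  refine Finset.sum_bij' ?fw ?bw ?Hfw ?Hbw ?lft ?rgt ?key
  case fw =>
    intro f hf
    exact fun s => ⟨(f ⟨s.1, lt_of_lt_of_le s.2 hck⟩ : ℕ),
      (my_mono_lt_iff f (Finset.mem_filter.mp (Finset.mem_filter.mp hf).1).2
          ⟨s.1, lt_of_lt_of_le s.2 hck⟩).mpr
        (by rw [(Finset.mem_filter.mp hf).2]; exact s.2)⟩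
  case bw =>
    intro g _
    exact fun t => if h : (t : ℕ) < c then (g ⟨t.1, h⟩).castSucc else Fin.last m
  case Hfw =>
    intro f hf
    simp only [Finset.mem_filter, Finset.mem_univ, true_and]
    intro a b hab
    have hmono := (Finset.mem_filter.mp (Finset.mem_filter.mp hf).1).2
    have := hmono ⟨a.1, lt_of_lt_of_le a.2 hck⟩ ⟨b.1, lt_of_lt_of_le b.2 hck⟩
      (Fin.mk_le_mk.mpr (Fin.le_def.mp hab))
    exact Fin.mk_le_mk.mpr (Fin.le_def.mp this)
  case Hbw =>
    intro g hg
    simp only [Finset.mem_filter, Finset.mem_univ, true_and] at hg ⊢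
    constructor
    · intro a b hab
      by_cases ha : (a : ℕ) < c
      · by_cases hb : (b : ℕ) < c
        · rw [dif_pos ha, dif_pos hb]
          have := hg ⟨a.1, ha⟩ ⟨b.1, hb⟩ (Fin.mk_le_mk.mpr (Fin.le_def.mp hab))
          rw [Fin.castSucc_le_castSucc_iff]
          exact this
        · rw [dif_pos ha, dif_neg hb]
          exact Fin.le_last _
      · have hb : ¬ ((b : ℕ) < c) := by
          rw [Fin.le_def] at hab; omega
        rw [dif_neg ha, dif_neg hb]
    · rw [show (univ.filter fun t : Fin k =>
          ((if h : (t : ℕ) < c then (g ⟨t.1, h⟩).castSucc else Fin.last m : Fin (m+1)) : ℕ) < m)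
          = univ.filter fun t : Fin k => (t : ℕ) < c from ?_]
      · exact my_card_filter_lt hck
      · apply Finset.filter_congr
        intro t _
        by_cases h : (t : ℕ) < c
        · simp only [dif_pos h, Fin.coe_castSucc]
          exact iff_of_true (g ⟨t.1, h⟩).2 h
        · simp only [dif_neg h, Fin.val_last]
          exact iff_of_false (lt_irrefl m) h
  case lft =>
    intro f hf
    funext t
    obtain ⟨hf1, hcard⟩ := Finset.mem_filter.mp hf
    obtain ⟨-, hmono⟩ := Finset.mem_filter.mp hf1
    by_cases h : (t : ℕ) < c
    · rw [dif_pos h]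
      apply Fin.ext
      simp
    · rw [dif_neg h]
      have hnot : ¬ ((f t : ℕ) < m) := by
        rw [my_mono_lt_iff f hmono, hcard]
        simpa using h
      have h2 := (f t).2
      apply Fin.ext
      simp only [Fin.val_last]
      omega
  case rgt =>
    intro g hg
    funext s
    apply Fin.ext
    simp [dif_pos s.2]
  case key =>
    intro f hf
    obtain ⟨hf1, hcard⟩ := Finset.mem_filter.mp hf
    obtain ⟨-, hmono⟩ := Finset.mem_filter.mp hf1
    set w := k - c with hw
    set F : ℕ → K := fun t =>
      if h : t < k then x (f ⟨t, h⟩) (r + ((k - 1 - t : ℕ) : ZMod n)) else 1 with hF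
    have h0 : ∏ t : Fin k, x (f t) (r + ((k - 1 - (t : ℕ) : ℕ) : ZMod n))
        = ∏ t ∈ range k, F t := by
      rw [← Fin.prod_univ_eq_prod_range]
      refine Finset.prod_congr rfl fun t _ => ?_
      rw [hF]
      simp only [dif_pos t.2, Fin.eta]
    have h1 : ∏ t ∈ range k, F t = (∏ t ∈ range c, F t) * ∏ s ∈ range w, F (c + s) := by
      have hkcw : k = c + w := by omega
      rw [hkcw, Finset.prod_range_add]
    have h2 : ∏ s ∈ range w, F (c + s)
        = ∏ s ∈ range w, x (Fin.last m) (r + (s : ZMod n)) := by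
      rw [← Finset.prod_range_reflect (fun s => x (Fin.last m) (r + (s : ZMod n))) w]
      refine Finset.prod_congr rfl fun s hs => ?_
      rw [Finset.mem_range] at hs
      have hcs : c + s < k := by omega
      rw [hF]
      simp only [dif_pos hcs]
      have hlast : f ⟨c + s, hcs⟩ = Fin.last m := by
        have hnot : ¬ ((f ⟨c + s, hcs⟩ : ℕ) < m) := by
          rw [my_mono_lt_iff f hmono, hcard]
          simp only [not_lt]
          omega
        have := (f ⟨c + s, hcs⟩).2
        apply Fin.ext
        simp only [Fin.val_last]
        omega
      rw [hlast]
      have hcol : (k - 1 - (c + s) : ℕ) = (w - 1 - s : ℕ) := by omega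
      rw [hcol]
    rw [h0, h1, h2, mul_comm]
    congr 1
    rw [← Fin.prod_univ_eq_prod_range F c]
    refine Finset.prod_congr rfl fun t _ => ?_
    have htk : (t : ℕ) < k := lt_of_lt_of_le t.2 hck
    rw [hF]
    simp only [dif_pos htk]
    have hcol : (k - 1 - (t : ℕ) : ℕ) = w + (c - 1 - (t : ℕ)) := by omega
    rw [hcol, Nat.cast_add, ← add_assoc]
    congr 1

lemma my_N_entries {n : ℕ} (y : ZMod n → K) (N : Matrix ℕ ℕ K)
    (h2 : utMul (chkInf N) (whirl n y) = oneM) :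
    ∀ d i, N i (i + d) = singleH n y d i := by
  intro d
  induction d with
  | zero =>
    intro i
    have h := congrFun (congrFun h2 i) i
    simp only [utMul, oneM, chkInf, whirl, Matrix.of_apply] at h
    rw [Finset.Icc_self, Finset.sum_singleton, if_pos rfl, mul_one,
      Even.neg_one_pow ⟨i, rfl⟩, one_mul, if_pos trivial] at h
    simpa [singleH] using h
  | succ d ih =>
    intro i
    have h := congrFun (congrFun h2 i) (i + d + 1)
    simp only [utMul, oneM, chkInf, whirl, Matrix.of_apply] at h
    rw [if_neg (by omega : ¬ i = i + d + 1)] at h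
    have hsub : ({i + d, i + d + 1} : Finset ℕ) ⊆ Finset.Icc i (i + d + 1) := by
      intro t ht
      simp only [Finset.mem_insert, Finset.mem_singleton] at ht
      rw [Finset.mem_Icc]
      omega
    have hz : ∀ t ∈ Finset.Icc i (i + d + 1), t ∉ ({i + d, i + d + 1} : Finset ℕ) →
        ((-1 : K) ^ (i + t) * N i t *
          (if i + d + 1 = t then 1 else if i + d + 1 = t + 1 then y (t : ZMod n) else 0)) = 0 := by
      intro t ht hnt
      rw [Finset.mem_Icc] at ht
      simp only [Finset.mem_insert, Finset.mem_singleton] at hnt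
      push_neg at hnt
      rw [if_neg (by omega), if_neg (by omega), mul_zero]
    rw [← Finset.sum_subset hsub hz, Finset.sum_pair (by omega : i + d ≠ i + d + 1),
      if_neg (by omega : ¬ i + d + 1 = i + d), if_pos rfl, if_pos rfl, mul_one] at h
    have h3 : (-1 : K) ^ (i + (i + d)) *
        (N i (i + d) * y (((i + d : ℕ)) : ZMod n) - N i (i + d + 1)) = 0 := by
      have hsign : ((-1 : K)) ^ (i + (i + d + 1)) = -((-1 : K)) ^ (i + (i + d)) := by
        rw [show i + (i + d + 1) = (i + (i + d)) + 1 by ring, pow_succ]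
        ring
      rw [hsign] at h
      linear_combination h
    have hne : ((-1 : K)) ^ (i + (i + d)) ≠ 0 := pow_ne_zero _ (by norm_num)
    have key : N i (i + d + 1) = N i (i + d) * y (((i + d : ℕ)) : ZMod n) := by
      rcases mul_eq_zero.mp h3 with h4 | h4
      · exact absurd h4 hne
      · exact (sub_eq_zero.mp h4).symm
    show N i (i + d + 1) = _
    rw [key, ih i, singleH, singleH, Finset.prod_range_succ]
    congr 1
    push_cast
    ring

def matOf {K : Type*} [Field K] (n : ℕ) (y : ZMod n → K) : Matrix ℕ ℕ K :=
  Matrix.of fun i j => if i ≤ j then singleH n y (j - i) ((i : ℕ) : ZMod n) else 0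

lemma my_foldr_congr {L L' : List (Matrix ℕ ℕ K)}
    (h : List.Forall₂ (fun A B => ∀ i j : ℕ, i ≤ j → A i j = B i j) L L') :
    ∀ i j : ℕ, i ≤ j → (L.foldr utMul oneM) i j = (L'.foldr utMul oneM) i j := by
  induction h with
  | nil => intro i j _; rfl
  | cons hAB hLL ih =>
    intro i j hij
    show utMul _ _ i j = utMul _ _ i j
    simp only [utMul, Matrix.of_apply]
    refine Finset.sum_congr rfl fun t ht => ?_
    rw [Finset.mem_Icc] at ht
    rw [hAB i t ht.1, ih t j ht.2]

lemma my_forall2_ofFn {m : ℕ} (A B : Fin m → Matrix ℕ ℕ K)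
    (h : ∀ b i j, i ≤ j → A b i j = B b i j) :
    List.Forall₂ (fun A B => ∀ i j : ℕ, i ≤ j → A i j = B i j) (List.ofFn A) (List.ofFn B) := by
  induction m with
  | zero => simp only [List.ofFn_zero]; exact List.Forall₂.nil
  | succ m ih =>
    rw [List.ofFn_succ, List.ofFn_succ]
    exact List.Forall₂.cons (h 0) (ih _ _ fun b => h b.succ)

lemma my_aux (n : ℕ) : ∀ (m : ℕ) (x : Fin m → ZMod n → K) (i j : ℕ), i ≤ j →
    ((List.ofFn fun b : Fin m => matOf n (x b.rev)).foldr utMul oneM) i j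
      = loopH m n x (j - i) ((i : ℕ) : ZMod n) := by
  intro m
  induction m with
  | zero =>
    intro x i j hij
    simp only [List.ofFn_zero, List.foldr_nil]
    by_cases hji : j = i
    · subst hji
      show (if j = j then (1:K) else 0) = _
      rw [if_pos rfl, Nat.sub_self, my_loopH_zero]
    · show (if i = j then (1:K) else 0) = _
      rw [if_neg (by omega), my_loopH_mzero n (j - i) x _ (by omega)]
  | succ m ih =>
    intro x i j hij
    rw [List.ofFn_succ]
    have htail : (fun b : Fin m => matOf n (x b.succ.rev)) =
        fun b : Fin m => matOf n ((fun c : Fin m => x c.castSucc) b.rev) := by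
      funext b
      show matOf n (x b.succ.rev) = matOf n (x b.rev.castSucc)
      rw [Fin.rev_succ]
    show utMul (matOf n (x (0 : Fin (m+1)).rev)) _ i j = _
    have hhead : (0 : Fin (m+1)).rev = Fin.last m := by
      apply Fin.ext
      simp [Fin.rev]
    rw [hhead]
    simp only [utMul, Matrix.of_apply]
    have hstep : ∀ t ∈ Finset.Icc i j,
        matOf n (x (Fin.last m)) i t *
          ((List.ofFn fun b : Fin m => matOf n (x b.succ.rev)).foldr utMul oneM) t j
        = singleH n (x (Fin.last m)) (t - i) ((i : ℕ) : ZMod n) *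
            loopH m n (fun c : Fin m => x c.castSucc) (j - t) ((t : ℕ) : ZMod n) := by
      intro t ht
      rw [Finset.mem_Icc] at ht
      rw [htail, ih (fun c : Fin m => x c.castSucc) t j ht.2]
      congr 1
      show (if i ≤ t then _ else _) = _
      rw [if_pos ht.1]
    rw [Finset.sum_congr rfl hstep]
    -- reindex Icc to range
    rw [show Finset.Icc i j = Finset.Ico i (j+1) by rw [Finset.Ico_add_one_right_eq_Icc],
      Finset.sum_Ico_eq_sum_range]
    have hlen : j + 1 - i = (j - i) + 1 := by omega
    rw [hlen]
    -- now match against loopH_succ with reflection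
    rw [my_loopH_succ m n (j - i) x ((i : ℕ) : ZMod n)]
    rw [← Finset.sum_range_reflect]
    refine Finset.sum_congr rfl fun a ha => ?_
    rw [Finset.mem_range] at ha
    have h2 : (j - i) + 1 - 1 - a = (j - i) - a := by omega
    rw [h2]
    have h3 : i + ((j - i) - a) - i = (j - i) - a := by omega
    have h4 : j - (i + ((j - i) - a)) = a := by omega
    rw [h3, h4, Nat.cast_add]

end MyHelpers

/-- The `(i,j)` entry of the product of curls `N(x_m) N(x_{m-1}) ⋯ N(x_1)` is the loop
homogeneous symmetric function `h_{j-i}^{(i)} = Σ_{i_k ≥ ⋯ ≥ i_1} x_{i_k}^{(r)} ⋯ x_{i_1}^{(r+k-1)}`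
with `k = j-i`, `r = i`.  Each curl `N(x_b)` is specified by `N(x_b) = (M(x_b)^{-1})^c`. -/
theorem statement4 {K : Type*} [Field K] (m n : ℕ) [NeZero n] (x : Fin m → ZMod n → K)
    (N : Fin m → Matrix ℕ ℕ K)
    (hinv1 : ∀ b, utMul (whirl n (x b)) (chkInf (N b)) = oneM)
    (hinv2 : ∀ b, utMul (chkInf (N b)) (whirl n (x b)) = oneM) :
    ∀ i j : ℕ, i ≤ j →
      ((List.ofFn fun b : Fin m => N b.rev).foldr utMul oneM) i j
        = loopH m n x (j - i) ((i : ℕ) : ZMod n) := by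
  intro i j hij
  have hN : ∀ b : Fin m, ∀ i' j' : ℕ, i' ≤ j' → N b i' j' = matOf n (x b) i' j' := by
    intro b i' j' h
    show _ = (if i' ≤ j' then singleH n (x b) (j' - i') ((i' : ℕ) : ZMod n) else 0)
    rw [if_pos h]
    have := my_N_entries (x b) (N b) (hinv2 b) (j' - i') i'
    rwa [Nat.add_sub_cancel' h] at this
  rw [my_foldr_congr (my_forall2_ofFn (fun b => N b.rev) (fun b => matOf n (x b.rev))
    (fun b => hN b.rev)) i j hij]
  exact my_aux n m x i j hij
end

section
/- With the birational action s_i defined via κ-ratios, the identity s_i(x_i^{(j)} + x_{i+1}^{(j)}) = x_i^{(j)} + x_{i+1}^{(j)} holds in the field of rational functions, i.e., x_{i+1}^{(j+1)} κ_i^{(j+1)} + x_i^{(j-1)} κ_i^{(j-1)} = (x_i^{(j)} + x_{i+1}^{(j)}) κ_i^{(j)}. -/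
open Finset

section aux

variable {K : Type*} [Field K] (n : ℕ) [NeZero n]

/-- product of `m` values of `f` at colors `r + a, r + a + 1, …`. -/
def prK (f : ZMod n → K) (r : ZMod n) (a m : ℕ) : K :=
  ∏ t ∈ Finset.range m, f (r + ((a + t : ℕ) : ZMod n))

lemma prK_succ_top (f : ZMod n → K) (r : ZMod n) (a m : ℕ) :
    prK n f r a (m + 1) = prK n f r a m * f (r + ((a + m : ℕ) : ZMod n)) := by
  simp [prK, Finset.prod_range_succ]

lemma prK_succ_bot (f : ZMod n → K) (r : ZMod n) (a m : ℕ) :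
    prK n f r a (m + 1) = f (r + ((a : ℕ) : ZMod n)) * prK n f r (a + 1) m := by
  rw [prK, Finset.prod_range_succ', mul_comm, Nat.add_zero]
  congr 1
  exact Finset.prod_congr rfl fun t _ => by congr 1; push_cast; ring

lemma prK_shift_up (f : ZMod n → K) (r : ZMod n) (a m : ℕ) :
    prK n f (r + 1) a m = prK n f r (a + 1) m := by
  apply Finset.prod_congr rfl
  intro t _
  congr 1
  push_cast
  ring

lemma prK_shift_down (f : ZMod n → K) (r : ZMod n) (a m : ℕ) :
    prK n f (r - 1) (a + 1) m = prK n f r a m := by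
  apply Finset.prod_congr rfl
  intro t _
  congr 1
  push_cast
  ring

lemma prK_full (f : ZMod n → K) (r : ZMod n) (a : ℕ) :
    prK n f r a n = ∏ c : ZMod n, f c := by
  have h1 : prK n f r a n = ∏ t ∈ Finset.range n, f ((r + (a:ℕ)) + ((t:ℕ) : ZMod n)) := by
    apply Finset.prod_congr rfl
    intro t _
    congr 1
    push_cast
    ring
  rw [h1]
  have h2 : ∏ t ∈ Finset.range n, f ((r + (a:ℕ)) + ((t:ℕ) : ZMod n))
      = ∏ c : ZMod n, f ((r + (a:ℕ)) + c) := by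
    apply Finset.prod_nbij' (fun t => ((t : ℕ) : ZMod n)) (fun c => c.val)
    · intro t _; exact Finset.mem_univ _
    · intro c _; exact Finset.mem_range.mpr (ZMod.val_lt c)
    · intro t ht; exact ZMod.val_cast_of_lt (Finset.mem_range.mp ht)
    · intro c _; exact ZMod.natCast_rightInverse c
    · intro t _; rfl
  rw [h2]
  exact Fintype.prod_bijective (fun c => (r + (a:ℕ)) + c)
    (AddGroup.addLeft_bijective _) _ _ (fun c => rfl)

lemma kappa_eq (xx yy : ZMod n → K) (r : ZMod n) :
    kappa n xx yy r = ∑ i ∈ Finset.range n, prK n yy r 1 i * prK n xx r (i + 1) (n - 1 - i) := by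
  unfold kappa
  apply Finset.sum_congr rfl
  intro i _
  congr 1
  · rw [show Finset.Icc 1 i = Finset.Ico 1 (i + 1) from (Finset.Ico_add_one_right_eq_Icc 1 i).symm,
      Finset.prod_Ico_eq_prod_range]
    apply Finset.prod_congr (by congr 1 <;> omega) (fun t _ => rfl)
  · rw [show Finset.Icc (i + 1) (n - 1) = Finset.Ico (i + 1) (n - 1 + 1) from
      (Finset.Ico_add_one_right_eq_Icc _ _).symm, Finset.prod_Ico_eq_prod_range]
    apply Finset.prod_congr (by congr 1 <;> omega) (fun t _ => rfl)

end aux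

section main
variable {K : Type*} [Field K] (n : ℕ) [NeZero n] (xx yy : ZMod n → K) (r : ZMod n)

def FF (i : ℕ) : K := prK n yy r 1 i * prK n xx r (i + 1) (n - i)
def GG (i : ℕ) : K := prK n yy r 0 (i + 1) * prK n xx r (i + 1) (n - 1 - i)
def HH (i : ℕ) : K := prK n yy r 0 i * prK n xx r i (n - i)

lemma L1 : yy (r + 1) * kappa n xx yy (r + 1) = ∑ i ∈ Finset.range n, FF n xx yy r (i + 1) := by
  rw [kappa_eq, Finset.mul_sum]
  refine Finset.sum_congr rfl fun i hi => ?_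
  have hi' : i < n := Finset.mem_range.mp hi
  unfold FF
  rw [prK_shift_up, prK_shift_up, prK_succ_bot, Nat.cast_one,
    show n - (i + 1) = n - 1 - i by omega]
  ring

lemma L2 : xx r * kappa n xx yy r = ∑ i ∈ Finset.range n, FF n xx yy r i := by
  rw [kappa_eq, Finset.mul_sum]
  refine Finset.sum_congr rfl fun i hi => ?_
  have hi' : i < n := Finset.mem_range.mp hi
  unfold FF
  rw [show n - i = (n - 1 - i) + 1 by omega, prK_succ_top,
    show ((i + 1 + (n - 1 - i) : ℕ) : ZMod n) = 0 by
      rw [show i + 1 + (n - 1 - i) = n by omega]; exact ZMod.natCast_self n,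
    add_zero]
  ring

lemma L3 : yy r * kappa n xx yy r = ∑ i ∈ Finset.range n, GG n xx yy r i := by
  rw [kappa_eq, Finset.mul_sum]
  refine Finset.sum_congr rfl fun i hi => ?_
  unfold GG
  rw [prK_succ_bot, Nat.cast_zero, add_zero, zero_add]
  ring

lemma L4 : xx (r - 1) * kappa n xx yy (r - 1) = ∑ i ∈ Finset.range n, HH n xx yy r i := by
  rw [kappa_eq, Finset.mul_sum]
  refine Finset.sum_congr rfl fun i hi => ?_
  have hi' : i < n := Finset.mem_range.mp hi
  have hn : 1 ≤ n := Nat.one_le_iff_ne_zero.mpr (NeZero.ne n)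
  unfold HH
  rw [show prK n yy (r - 1) 1 i = prK n yy r 0 i from prK_shift_down n yy r 0 i,
    prK_shift_down n xx r i (n - 1 - i),
    show n - i = (n - 1 - i) + 1 by omega, prK_succ_top,
    show ((i + (n - 1 - i) : ℕ) : ZMod n) = -1 by
      rw [show i + (n - 1 - i) = n - 1 by omega, Nat.cast_sub hn, ZMod.natCast_self,
        Nat.cast_one, zero_sub],
    show r + -1 = r - 1 from (sub_eq_add_neg r 1).symm]
  ring

lemma HG (i : ℕ) : HH n xx yy r (i + 1) = GG n xx yy r i := by
  unfold HH GG
  rw [show n - (i + 1) = n - 1 - i by omega]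

lemma FF0 : FF n xx yy r 0 = ∏ c : ZMod n, xx c := by
  unfold FF
  rw [show prK n yy r 1 0 = 1 from rfl, one_mul, Nat.sub_zero, prK_full]

lemma HH0 : HH n xx yy r 0 = ∏ c : ZMod n, xx c := by
  unfold HH
  rw [show prK n yy r 0 0 = 1 from rfl, one_mul, Nat.sub_zero, prK_full]

lemma FFn : FF n xx yy r n = ∏ c : ZMod n, yy c := by
  unfold FF
  rw [Nat.sub_self, show prK n xx r (n + 1) 0 = 1 from rfl, mul_one, prK_full]

lemma GGn : GG n xx yy r (n - 1) = ∏ c : ZMod n, yy c := by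
  have hn : 1 ≤ n := Nat.one_le_iff_ne_zero.mpr (NeZero.ne n)
  unfold GG
  rw [Nat.sub_self, show n - 1 + 1 = n by omega,
    show prK n xx r n 0 = 1 from rfl, mul_one, prK_full]

end main


/-- The κ-identity: `y^{(j+1)} κ^{(j+1)}(x,y) + x^{(j-1)} κ^{(j-1)}(x,y)
  = (x^{(j)} + y^{(j)}) κ^{(j)}(x,y)`. -/
theorem statement6 {K : Type*} [Field K] (n : ℕ) [NeZero n] (xx yy : ZMod n → K) (j : ZMod n) :
    yy (j + 1) * kappa n xx yy (j + 1) + xx (j - 1) * kappa n xx yy (j - 1) =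
      (xx j + yy j) * kappa n xx yy j := by
  obtain ⟨m, rfl⟩ : ∃ m, n = m + 1 := ⟨n - 1, by have := Nat.one_le_iff_ne_zero.mpr (NeZero.ne n); omega⟩
  rw [add_mul, L1, L4, L2, L3]
  have sF := Finset.sum_range_succ' (FF (m + 1) xx yy j) m
  have sFa := Finset.sum_range_succ (fun i => FF (m + 1) xx yy j (i + 1)) m
  have sH := Finset.sum_range_succ' (HH (m + 1) xx yy j) m
  have sG := Finset.sum_range_succ (GG (m + 1) xx yy j) m
  have hHG : ∑ i ∈ Finset.range m, HH (m + 1) xx yy j (i + 1)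
      = ∑ i ∈ Finset.range m, GG (m + 1) xx yy j i :=
    Finset.sum_congr rfl fun i _ => HG (m + 1) xx yy j i
  rw [hHG] at sH
  have hmm : m + 1 - 1 = m := rfl
  have h1 := FF0 (m + 1) xx yy j
  have h2 := HH0 (m + 1) xx yy j
  have h3 := FFn (m + 1) xx yy j
  have h4 := GGn (m + 1) xx yy j
  rw [hmm] at h4
  linear_combination sFa + sH - sF - sG + h3 - h4 + h2 - h1
end

section
/- The whirl product M(x)M(y) is invariant under the birational R-matrix map s: explicitly, M(x)M(y) = M(x')M(y') where x'^{(j)} = y^{(j+1)} κ^{(j+1)}(x,y)/κ^{(j)}(x,y) and y'^{(j)} = x^{(j-1)} κ^{(j-1)}(x,y)/κ^{(j)}(x,y). Equivalently, x^{(j)} + y^{(j)} = x'^{(j)} + y'^{(j)} and x^{(j)} y^{(j+1)} = x'^{(j)} y'^{(j+1)} for all j mod n. -/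
open Finset

section WhirlAux

open Finset

lemma kappa_apply_range {K : Type*} [Field K] (n : ℕ) (hn : 1 ≤ n) (xx yy : ZMod n → K)
    (r : ZMod n) :
    kappa n xx yy r = ∑ k ∈ Finset.range n,
      (∏ i ∈ Finset.range k, yy (r + ((1 + i : ℕ) : ZMod n))) *
        ∏ i ∈ Finset.range (n - 1 - k), xx (r + ((k + 1 + i : ℕ) : ZMod n)) := by
  unfold kappa
  refine Finset.sum_congr rfl fun k hk => ?_
  rw [show Finset.Icc 1 k = Finset.Ico 1 (k+1) from rfl,
      show Finset.Icc (k+1) (n-1) = Finset.Ico (k+1) (n-1+1) from rfl,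
      Finset.prod_Ico_eq_prod_range, Finset.prod_Ico_eq_prod_range,
      show k + 1 - 1 = k from rfl, show n - 1 + 1 - (k+1) = n - 1 - k by omega]

lemma keyYX {K : Type*} [Field K] (n : ℕ) (hn : 1 ≤ n) (Y X : ℕ → K)
    (hY : Y n = Y 0) (hX : X n = X 0) :
    (X 0 + Y 0) *
        ∑ k ∈ range n, (∏ i ∈ range k, Y (1 + i)) * ∏ i ∈ range (n - 1 - k), X (k + 1 + i) =
      Y 1 * ∑ k ∈ range n, (∏ i ∈ range k, Y (2 + i)) * ∏ i ∈ range (n - 1 - k), X (k + 2 + i) +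
      X (n - 1) * ∑ k ∈ range n, (∏ i ∈ range k, Y i) * ∏ i ∈ range (n - 1 - k), X (k + i) := by
  obtain ⟨m, rfl⟩ : ∃ m, n = m + 1 := ⟨n - 1, by omega⟩
  simp only [Nat.add_sub_cancel]
  set A : ℕ → K := fun k => (∏ i ∈ range k, Y (1 + i)) * ∏ i ∈ range (m - k), X (k + 1 + i)
    with hA
  have e1 : ∀ k : ℕ, ∏ i ∈ range (k + 1), Y (1 + i) = Y 1 * ∏ i ∈ range k, Y (2 + i) := by
    intro k
    rw [Finset.prod_range_succ' (fun i => Y (1 + i)) k]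
    rw [mul_comm]
    congr 1
    exact Finset.prod_congr rfl fun i _ => by rw [show 1 + (i + 1) = 2 + i by omega]
  have e0 : ∀ k : ℕ, ∏ i ∈ range (k + 1), Y i = Y 0 * ∏ i ∈ range k, Y (1 + i) := by
    intro k
    rw [Finset.prod_range_succ' Y k, mul_comm]
    congr 1
    exact Finset.prod_congr rfl fun i _ => by rw [add_comm]
  have hB : ∀ k, k < m → Y 1 * ((∏ i ∈ range k, Y (2 + i)) * ∏ i ∈ range (m - k), X (k + 2 + i))
      = X 0 * A (k + 1) := by
    intro k hk
    rw [hA]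
    simp only
    rw [e1 k, show m - (k + 1) = m - k - 1 by omega]
    simp only [show k + 1 + 1 = k + 2 from rfl]
    rw [show m - k = (m - k - 1) + 1 by omega, Finset.prod_range_succ,
      show k + 2 + (m - k - 1) = m + 1 by omega, hX]
    simp only [Nat.add_sub_cancel]
    ring
  have hBm : Y 1 * ((∏ i ∈ range m, Y (2 + i)) * ∏ i ∈ range (m - m), X (m + 2 + i))
      = Y 0 * A m := by
    rw [hA]; simp only [Nat.sub_self, Finset.range_zero, Finset.prod_empty, mul_one]
    rw [← e1 m, Finset.prod_range_succ, show 1 + m = m + 1 from by omega, hY]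
    ring
  have hC : ∀ k, k < m →
      X m * ((∏ i ∈ range (k + 1), Y i) * ∏ i ∈ range (m - (k + 1)), X (k + 1 + i))
      = Y 0 * A k := by
    intro k hk
    rw [hA]
    simp only
    rw [e0 k, show m - k = (m - (k + 1)) + 1 by omega, Finset.prod_range_succ,
      show k + 1 + (m - (k + 1)) = m by omega]
    ring
  have hC0 : X m * ((∏ i ∈ range 0, Y i) * ∏ i ∈ range (m - 0), X (0 + i))
      = X 0 * A 0 := by
    rw [hA]
    simp only [Finset.range_zero, Finset.prod_empty, one_mul, Nat.sub_zero]
    have p1 : ∏ i ∈ range (m + 1), X i = (∏ i ∈ range m, X (0 + i)) * X m := by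
      rw [Finset.prod_range_succ]
      congr 1
      exact Finset.prod_congr rfl fun i _ => by rw [Nat.zero_add]
    have p2 : ∏ i ∈ range (m + 1), X i = X 0 * ∏ i ∈ range m, X (0 + 1 + i) := by
      rw [Finset.prod_range_succ' X m, mul_comm]
      congr 1
      exact Finset.prod_congr rfl fun i _ => by rw [show 0 + 1 + i = i + 1 by omega]
    rw [mul_comm (X m), ← p1, p2]
  have RB : Y 1 * ∑ k ∈ range (m + 1),
      (∏ i ∈ range k, Y (2 + i)) * ∏ i ∈ range (m - k), X (k + 2 + i)
      = (∑ k ∈ range m, X 0 * A (k + 1)) + Y 0 * A m := by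
    rw [Finset.sum_range_succ, mul_add, Finset.mul_sum, hBm]
    congr 1
    exact Finset.sum_congr rfl fun k hk => hB k (Finset.mem_range.mp hk)
  have RC : X m * ∑ k ∈ range (m + 1),
      (∏ i ∈ range k, Y i) * ∏ i ∈ range (m - k), X (k + i)
      = (∑ k ∈ range m, Y 0 * A k) + X 0 * A 0 := by
    rw [Finset.sum_range_succ', mul_add, Finset.mul_sum, hC0]
    congr 1
    exact Finset.sum_congr rfl fun k hk => hC k (Finset.mem_range.mp hk)
  have hL1 : ∑ k ∈ range (m + 1), A k = A 0 + ∑ k ∈ range m, A (k + 1) := by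
    rw [Finset.sum_range_succ' A m]; ring
  have hL2 : ∑ k ∈ range (m + 1), A k = (∑ k ∈ range m, A k) + A m :=
    Finset.sum_range_succ A m
  rw [RB, RC]
  simp only [← Finset.mul_sum]
  have hS : (range (m + 1)).sum A = ∑ k ∈ range (m + 1), A k := rfl
  rw [hS] at hL1 hL2 ⊢
  linear_combination X 0 * hL1 + Y 0 * hL2

lemma kappa_key {K : Type*} [Field K] (n : ℕ) [NeZero n] (xx yy : ZMod n → K) (r : ZMod n) :
    (xx r + yy r) * kappa n xx yy r =
      yy (r + 1) * kappa n xx yy (r + 1) + xx (r - 1) * kappa n xx yy (r - 1) := by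
  have hn : 1 ≤ n := Nat.one_le_iff_ne_zero.mpr (NeZero.ne n)
  set Y : ℕ → K := fun m => yy (r + (m : ZMod n)) with hYdef
  set X : ℕ → K := fun m => xx (r + (m : ZMod n)) with hXdef
  have hY : Y n = Y 0 := by simp [hYdef, ZMod.natCast_self]
  have hX : X n = X 0 := by simp [hXdef, ZMod.natCast_self]
  have hcast : ((n - 1 : ℕ) : ZMod n) = -1 := by
    rw [Nat.cast_sub hn, ZMod.natCast_self]
    push_cast
    ring
  have hx0 : xx r = X 0 := by simp [hXdef]
  have hy0 : yy r = Y 0 := by simp [hYdef]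
  have hy1 : yy (r + 1) = Y 1 := by simp [hYdef]
  have hxn : xx (r - 1) = X (n - 1) := by
    rw [hXdef]
    simp only [hcast]
    rw [sub_eq_add_neg]
  have h0 : kappa n xx yy r = ∑ k ∈ range n,
      (∏ i ∈ range k, Y (1 + i)) * ∏ i ∈ range (n - 1 - k), X (k + 1 + i) := by
    rw [kappa_apply_range n hn]
  have h1 : kappa n xx yy (r + 1) = ∑ k ∈ range n,
      (∏ i ∈ range k, Y (2 + i)) * ∏ i ∈ range (n - 1 - k), X (k + 2 + i) := by
    rw [kappa_apply_range n hn]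
    refine Finset.sum_congr rfl fun k _ => ?_
    congr 1
    · refine Finset.prod_congr rfl fun i _ => ?_
      simp only [hYdef]
      congr 1
      push_cast
      ring
    · refine Finset.prod_congr rfl fun i _ => ?_
      simp only [hXdef]
      congr 1
      push_cast
      ring
  have h2 : kappa n xx yy (r - 1) = ∑ k ∈ range n,
      (∏ i ∈ range k, Y i) * ∏ i ∈ range (n - 1 - k), X (k + i) := by
    rw [kappa_apply_range n hn]
    refine Finset.sum_congr rfl fun k _ => ?_
    congr 1
    · refine Finset.prod_congr rfl fun i _ => ?_
      simp only [hYdef]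
      congr 1
      push_cast
      ring
    · refine Finset.prod_congr rfl fun i _ => ?_
      simp only [hXdef]
      congr 1
      push_cast
      ring
  rw [h0, h1, h2, hx0, hy0, hy1, hxn]
  exact keyYX n hn Y X hY hX

lemma whirl_mul_apply {K : Type*} [Field K] (n : ℕ) (a b : ZMod n → K) (i j : ℕ) :
    utMul (whirl n a) (whirl n b) i j =
      if j = i then 1
      else if j = i + 1 then a (i : ZMod n) + b (i : ZMod n)
      else if j = i + 2 then a (i : ZMod n) * b ((i : ZMod n) + 1) else 0 := by
  unfold utMul whirl
  simp only [Matrix.of_apply]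
  by_cases h0 : j = i
  · subst h0; rw [Finset.Icc_self, Finset.sum_singleton, if_pos rfl, if_pos rfl, if_pos rfl]
    rw [one_mul]
  by_cases h1 : j = i + 1
  · subst h1
    rw [Finset.sum_Icc_succ_top (by omega), Finset.Icc_self, Finset.sum_singleton]
    rw [if_neg h0, if_pos rfl, if_pos rfl, if_neg (by omega : i + 1 ≠ i), if_pos rfl,
      if_pos rfl, if_pos rfl, one_mul, mul_one, add_comm, if_neg h0]
  by_cases h2 : j = i + 2
  · subst h2
    rw [Finset.sum_Icc_succ_top (by omega), Finset.sum_Icc_succ_top (by omega),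
      Finset.Icc_self, Finset.sum_singleton]
    rw [if_neg h0, if_neg h1, if_pos rfl]
    rw [if_pos rfl, if_neg (by omega : i + 2 ≠ i), if_neg (by omega : i + 2 ≠ i + 1),
      if_neg (by omega : i + 1 ≠ i), if_pos rfl, if_neg (by omega : i + 2 ≠ i + 1),
      if_pos rfl, if_neg (by omega : i + 2 ≠ i), if_neg (by omega : i + 2 ≠ i + 1),
      if_pos rfl]
    push_cast
    ring
  · rcases Nat.lt_or_ge j i with h | h
    · rw [Finset.Icc_eq_empty (by omega), Finset.sum_empty, if_neg h0, if_neg h1, if_neg h2]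
    · rw [if_neg h0, if_neg h1, if_neg h2]
      refine Finset.sum_eq_zero fun t ht => ?_
      rw [Finset.mem_Icc] at ht
      by_cases hti : t = i
      · subst hti; rw [if_neg h0, if_neg h1, mul_zero]
      by_cases hti1 : t = i + 1
      · subst hti1; rw [if_neg h1, if_neg h2, mul_zero]
      · rw [if_neg hti, if_neg hti1, zero_mul]

end WhirlAux

/-- Invariance of the whirl product under the birational `R`-matrix:
`M(x)M(y) = M(x')M(y')` with `x'^{(j)} = y^{(j+1)} κ^{(j+1)}/κ^{(j)}`,
`y'^{(j)} = x^{(j-1)} κ^{(j-1)}/κ^{(j)}`; equivalently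
`x^{(j)} + y^{(j)} = x'^{(j)} + y'^{(j)}` and `x^{(j)} y^{(j+1)} = x'^{(j)} y'^{(j+1)}`. -/
theorem statement7 {K : Type*} [Field K] (n : ℕ) [NeZero n] (xx yy : ZMod n → K)
    (hκ : ∀ r, kappa n xx yy r ≠ 0) :
    utMul (whirl n xx) (whirl n yy) =
      utMul (whirl n fun j => yy (j + 1) * kappa n xx yy (j + 1) / kappa n xx yy j)
        (whirl n fun j => xx (j - 1) * kappa n xx yy (j - 1) / kappa n xx yy j) ∧
    (∀ j : ZMod n,
      xx j + yy j =
        yy (j + 1) * kappa n xx yy (j + 1) / kappa n xx yy j +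
          xx (j - 1) * kappa n xx yy (j - 1) / kappa n xx yy j) ∧
    (∀ j : ZMod n,
      xx j * yy (j + 1) =
        (yy (j + 1) * kappa n xx yy (j + 1) / kappa n xx yy j) *
          (xx j * kappa n xx yy j / kappa n xx yy (j + 1))) := by
  have h2 : ∀ j : ZMod n,
      xx j + yy j =
        yy (j + 1) * kappa n xx yy (j + 1) / kappa n xx yy j +
          xx (j - 1) * kappa n xx yy (j - 1) / kappa n xx yy j := by
    intro j
    have key := kappa_key n xx yy j
    have ha := hκ j
    have hb := hκ (j + 1)
    have hc := hκ (j - 1)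
    field_simp
    linear_combination key
  have h3 : ∀ j : ZMod n,
      xx j * yy (j + 1) =
        (yy (j + 1) * kappa n xx yy (j + 1) / kappa n xx yy j) *
          (xx j * kappa n xx yy j / kappa n xx yy (j + 1)) := by
    intro j
    have ha := hκ j
    have hb := hκ (j + 1)
    field_simp
  refine ⟨?_, h2, h3⟩
  ext i j
  rw [whirl_mul_apply, whirl_mul_apply]
  by_cases h0 : j = i
  · rw [if_pos h0, if_pos h0]
  by_cases h1 : j = i + 1
  · rw [if_neg h0, if_neg h0, if_pos h1, if_pos h1]
    exact h2 _
  by_cases hj2 : j = i + 2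
  · rw [if_neg h0, if_neg h0, if_neg h1, if_neg h1, if_pos hj2, if_pos hj2]
    rw [add_sub_cancel_right]
    exact h3 _
  · rw [if_neg h0, if_neg h0, if_neg h1, if_neg h1, if_neg hj2, if_neg hj2]
end

section
/- The birational map s_i is an involution: s_i^2 = identity on the field of rational functions Q(x_i^{(j)}). -/
open Finset

/-- The rational function field `Q(x_i^{(j)})` in the `mn` variables. -/
noncomputable abbrev RF (m n : ℕ) : Type :=
  FractionRing (MvPolynomial (Fin m × ZMod n) ℚ)

/-- The variable `x_i^{(j)}` as an element of the rational function field. -/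
noncomputable def xv (m n : ℕ) (i : Fin m) (j : ZMod n) : RF m n :=
  algebraMap (MvPolynomial (Fin m × ZMod n) ℚ) (RF m n) (MvPolynomial.X (i, j))


-- Auxiliary lemmas ---------------------------------------------------------

lemma zprod {M : Type*} [CommMonoid M] {n : ℕ} [NeZero n] (f : ZMod n → M) :
    ∏ t ∈ Finset.range n, f (t : ZMod n) = ∏ j : ZMod n, f j := by
  refine Finset.prod_nbij' (fun t => ((t : ZMod n))) (fun j => j.val) ?_ ?_ ?_ ?_ ?_
  · intro a _; exact Finset.mem_univ _
  · intro b _; exact Finset.mem_range.2 b.val_lt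
  · intro a ha; exact ZMod.val_cast_of_lt (Finset.mem_range.1 ha)
  · intro b _; exact ZMod.natCast_rightInverse b
  · intro a _; rfl

lemma zprod_shift {M : Type*} [CommMonoid M] {n : ℕ} [NeZero n] (f : ZMod n → M) (c : ZMod n) :
    ∏ j : ZMod n, f (j + c) = ∏ j : ZMod n, f j :=
  Fintype.prod_equiv (Equiv.addRight c) _ _ (fun _ => rfl)

lemma prod_range_piv {K : Type*} [Field K] {n : ℕ} [NeZero n] (f : ZMod n → K) (c : ZMod n) :
    ∏ t ∈ Finset.range n, f (c + (t : ZMod n)) = pivar n f := by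
  rw [zprod (fun j => f (c + j))]
  rw [pivar]
  exact Fintype.prod_equiv (Equiv.addLeft c) _ _ (fun _ => rfl)

lemma kappa_range {K : Type*} [Field K] (p : ℕ) (xx yy : ZMod (p+1) → K) (r : ZMod (p+1)) :
    kappa (p+1) xx yy r = ∑ j ∈ range (p+1),
      (∏ t ∈ range j, yy (r + ((1+t : ℕ) : ZMod (p+1)))) *
        ∏ t ∈ range (p - j), xx (r + ((j+1+t : ℕ) : ZMod (p+1))) := by
  unfold kappa
  refine Finset.sum_congr rfl fun j hj => ?_
  congr 1
  · rw [← Finset.Ico_add_one_right_eq_Icc, Finset.prod_Ico_eq_prod_range]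
    simp
  · rw [← Finset.Ico_add_one_right_eq_Icc, Finset.prod_Ico_eq_prod_range]
    have h1 : p + 1 - 1 + 1 - (j + 1) = p - j := by omega
    rw [h1]

lemma star {K : Type*} [Field K] (n : ℕ) [NeZero n] (xx yy : ZMod n → K) (r : ZMod n) :
    xx r * kappa n xx yy r + pivar n yy = yy (r + 1) * kappa n xx yy (r + 1) + pivar n xx := by
  obtain ⟨p, rfl⟩ : ∃ p, n = p + 1 :=
    ⟨n - 1, (Nat.succ_pred_eq_of_pos (Nat.pos_of_ne_zero (NeZero.ne n))).symm⟩
  rw [kappa_range, kappa_range, Finset.mul_sum, Finset.mul_sum,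
    Finset.sum_range_succ' _ p, Finset.sum_range_succ _ p]
  have c1 : xx r * ((∏ t ∈ range 0, yy (r + ((1+t : ℕ) : ZMod (p+1)))) *
      ∏ t ∈ range (p - 0), xx (r + ((0+1+t : ℕ) : ZMod (p+1)))) = pivar (p+1) xx := by
    have h := Finset.prod_range_succ' (fun t => xx (r + ((t : ℕ) : ZMod (p+1)))) p
    rw [prod_range_piv] at h
    simp only [range_zero, prod_empty, one_mul, Nat.sub_zero]
    rw [h]
    simp only [Nat.cast_zero, add_zero]
    rw [mul_comm]
    congr 1
    refine Finset.prod_congr rfl fun t _ => ?_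
    congr 1 <;> (push_cast; ring)
  have c2 : yy (r+1) * ((∏ t ∈ range p, yy (r + 1 + ((1+t : ℕ) : ZMod (p+1)))) *
      ∏ t ∈ range (p - p), xx (r + 1 + ((p+1+t : ℕ) : ZMod (p+1)))) = pivar (p+1) yy := by
    have h := Finset.prod_range_succ' (fun t => yy (r + 1 + ((t : ℕ) : ZMod (p+1)))) p
    rw [prod_range_piv] at h
    simp only [Nat.sub_self, range_zero, prod_empty, mul_one]
    rw [h]
    simp only [Nat.cast_zero, add_zero]
    rw [mul_comm]
    congr 1
    refine Finset.prod_congr rfl fun t _ => ?_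
    congr 1 <;> (push_cast; ring)
  have c3 : ∀ j ∈ range p,
      xx r * ((∏ t ∈ range (j+1), yy (r + ((1+t : ℕ) : ZMod (p+1)))) *
        ∏ t ∈ range (p - (j+1)), xx (r + ((j+1+1+t : ℕ) : ZMod (p+1)))) =
      yy (r+1) * ((∏ t ∈ range j, yy (r + 1 + ((1+t : ℕ) : ZMod (p+1)))) *
        ∏ t ∈ range (p - j), xx (r + 1 + ((j+1+t : ℕ) : ZMod (p+1)))) := by
    intro j hj
    have hjp := Finset.mem_range.1 hj
    rw [Finset.prod_range_succ' (fun t => yy (r + ((1+t : ℕ) : ZMod (p+1)))) j]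
    rw [show p - j = (p - (j+1)) + 1 by omega, Finset.prod_range_succ]
    have e0 : yy (r + ((1 + 0 : ℕ) : ZMod (p+1))) = yy (r + 1) := by
      congr 1 <;> (push_cast; ring)
    have etop : xx (r + 1 + ((j+1+(p - (j+1)) : ℕ) : ZMod (p+1))) = xx r := by
      congr 1
      have h1 : (j+1+(p - (j+1)) : ℕ) = p := by omega
      rw [h1]
      have h2 : ((p : ℕ) : ZMod (p+1)) + 1 = 0 := by
        rw [show ((p : ℕ) : ZMod (p+1)) + 1 = (((p+1 : ℕ)) : ZMod (p+1)) by push_cast; ring,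
          ZMod.natCast_self]
      rw [add_assoc, add_comm (1 : ZMod (p+1)), h2, add_zero]
    have ey : ∀ t ∈ range j, yy (r + ((1+(t+1) : ℕ) : ZMod (p+1))) =
        yy (r + 1 + ((1+t : ℕ) : ZMod (p+1))) := by
      intro t _; congr 1 <;> (push_cast; ring)
    have ex : ∀ t ∈ range (p - (j+1)), xx (r + ((j+1+1+t : ℕ) : ZMod (p+1))) =
        xx (r + 1 + ((j+1+t : ℕ) : ZMod (p+1))) := by
      intro t _; congr 1 <;> (push_cast; ring)
    rw [Finset.prod_congr rfl ey, Finset.prod_congr rfl ex, e0, etop]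
    ring
  rw [Finset.sum_congr rfl c3, c1, c2]
  ring

lemma map_kappa {K : Type*} [Field K] (σ : K ≃+* K) (n : ℕ) (xx yy : ZMod n → K) (r : ZMod n) :
    σ (kappa n xx yy r) = kappa n (fun j => σ (xx j)) (fun j => σ (yy j)) r := by
  simp [kappa, map_sum, map_mul, map_prod]

lemma sigma_kappa {K : Type*} [Field K] (n : ℕ) [NeZero n] (σ : K ≃+* K) (xx yy : ZMod n → K)
    (hx : ∀ j, xx j ≠ 0)
    (hκ : ∀ r, kappa n xx yy r ≠ 0)
    (h1 : ∀ j, σ (xx j) = yy (j+1) * kappa n xx yy (j+1) / kappa n xx yy j)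
    (h2 : ∀ j, σ (yy j) = xx (j-1) * kappa n xx yy (j-1) / kappa n xx yy j)
    (hP : pivar n xx ≠ pivar n yy) :
    ∀ r, σ (kappa n xx yy r) = kappa n xx yy r := by
  have hσPx : pivar n (fun j => σ (xx j)) = pivar n yy := by
    unfold pivar
    rw [Finset.prod_congr rfl (fun j _ => h1 j), Finset.prod_div_distrib,
      Finset.prod_mul_distrib]
    rw [zprod_shift (fun j => yy j) 1, zprod_shift (fun j => kappa n xx yy j) 1]
    rw [mul_div_assoc, div_self (Finset.prod_ne_zero_iff.2 fun r _ => hκ r), mul_one]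
  have hσPy : pivar n (fun j => σ (yy j)) = pivar n xx := by
    unfold pivar
    rw [Finset.prod_congr rfl (fun j _ => h2 j), Finset.prod_div_distrib,
      Finset.prod_mul_distrib]
    simp only [sub_eq_add_neg]
    rw [zprod_shift (fun j => xx j) (-1), zprod_shift (fun j => kappa n xx yy j) (-1)]
    rw [mul_div_assoc, div_self (Finset.prod_ne_zero_iff.2 fun r _ => hκ r), mul_one]
  have R : ∀ r, yy (r+1) * (kappa n xx yy (r+1))^2 * (σ (kappa n xx yy r) - kappa n xx yy r)
      = xx r * (kappa n xx yy r)^2 * (σ (kappa n xx yy (r+1)) - kappa n xx yy (r+1)) := by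
    intro r
    have S1 := star n xx yy r
    have S2 := star n (fun j => σ (xx j)) (fun j => σ (yy j)) r
    simp only [← map_kappa] at S2
    rw [hσPx, hσPy, h1 r, h2 (r+1), add_sub_cancel_right] at S2
    field_simp [hκ r, hκ (r+1)] at S2
    linear_combination S2 + (kappa n xx yy r * kappa n xx yy (r+1)) * S1
  have hprod : ∏ r : ZMod n, (σ (kappa n xx yy r) - kappa n xx yy r) = 0 := by
    by_contra hd
    have HH : ∏ r : ZMod n, (yy (r+1) * (kappa n xx yy (r+1))^2 *
          (σ (kappa n xx yy r) - kappa n xx yy r))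
        = ∏ r : ZMod n, (xx r * (kappa n xx yy r)^2 *
          (σ (kappa n xx yy (r+1)) - kappa n xx yy (r+1))) :=
      Finset.prod_congr rfl fun r _ => R r
    simp only [Finset.prod_mul_distrib] at HH
    rw [zprod_shift (fun j => yy j) 1, zprod_shift (fun j => (kappa n xx yy j)^2) 1,
      zprod_shift (fun j => σ (kappa n xx yy j) - kappa n xx yy j) 1] at HH
    have hA : (∏ r : ZMod n, (kappa n xx yy r)^2) ≠ 0 :=
      Finset.prod_ne_zero_iff.2 fun r _ => pow_ne_zero _ (hκ r)
    exact hP ((mul_right_cancel₀ hA (mul_right_cancel₀ hd HH)).symm)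
  obtain ⟨r0, -, hr0⟩ := Finset.prod_eq_zero_iff.1 hprod
  have step : ∀ k : ℕ,
      σ (kappa n xx yy (r0 + (k : ZMod n))) - kappa n xx yy (r0 + (k : ZMod n)) = 0 := by
    intro k
    induction k with
    | zero => simpa using hr0
    | succ k ih =>
      have hR := R (r0 + (k : ZMod n))
      rw [ih, mul_zero] at hR
      have hB : xx (r0 + (k : ZMod n)) * (kappa n xx yy (r0 + (k : ZMod n)))^2 ≠ 0 :=
        mul_ne_zero (hx _) (pow_ne_zero _ (hκ _))
      have h0 := (mul_eq_zero.1 hR.symm).resolve_left hB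
      rw [show ((k+1 : ℕ) : ZMod n) = (k : ZMod n) + 1 by push_cast; ring, ← add_assoc]
      exact h0
  intro r
  have h0 := step ((r - r0).val)
  rw [ZMod.natCast_rightInverse (r - r0), show r0 + (r - r0) = r by ring] at h0
  exact sub_eq_zero.1 h0

/-- The birational map `s_i` is an involution on the field `Q(x_i^{(j)})`. -/
theorem statement8 (m n : ℕ) [NeZero n] (i i' : Fin m) (hii' : (i' : ℕ) = (i : ℕ) + 1)
    (σ : RF m n ≃+* RF m n)
    (hκ : ∀ r, kappa n (xv m n i) (xv m n i') r ≠ 0)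
    (h1 : ∀ j, σ (xv m n i j) =
      xv m n i' (j + 1) * kappa n (xv m n i) (xv m n i') (j + 1) /
        kappa n (xv m n i) (xv m n i') j)
    (h2 : ∀ j, σ (xv m n i' j) =
      xv m n i (j - 1) * kappa n (xv m n i) (xv m n i') (j - 1) /
        kappa n (xv m n i) (xv m n i') j)
    (h3 : ∀ k j, k ≠ i → k ≠ i' → σ (xv m n k j) = xv m n k j) :
    ∀ z : RF m n, σ (σ z) = z := by
  have hinj : Function.Injective (algebraMap (MvPolynomial (Fin m × ZMod n) ℚ) (RF m n)) :=
    IsFractionRing.injective _ _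
  have hx0 : ∀ (k : Fin m) (j : ZMod n), xv m n k j ≠ 0 := by
    intro k j h
    have h' : (algebraMap (MvPolynomial (Fin m × ZMod n) ℚ) (RF m n)) (MvPolynomial.X (k, j)) =
        (algebraMap (MvPolynomial (Fin m × ZMod n) ℚ) (RF m n)) 0 := by
      rw [map_zero]; exact h
    exact MvPolynomial.X_ne_zero _ (hinj h')
  have hii : i' ≠ i := by
    intro h; rw [h] at hii'; omega
  have hP : pivar n (xv m n i) ≠ pivar n (xv m n i') := by
    unfold pivar
    have e : ∀ k : Fin m, ∏ j : ZMod n, xv m n k j =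
        algebraMap (MvPolynomial (Fin m × ZMod n) ℚ) (RF m n)
          (∏ j : ZMod n, MvPolynomial.X (k, j)) := by
      intro k; rw [map_prod]; rfl
    rw [e i, e i']
    intro h
    have h' := hinj h
    have h2' := congrArg
      (MvPolynomial.eval (fun p : Fin m × ZMod n => if p.1 = i then (0:ℚ) else 1)) h'
    rw [map_prod, map_prod] at h2'
    have hcard : Fintype.card (ZMod n) ≠ 0 := by simp [ZMod.card, NeZero.ne n]
    simp [hii, Finset.prod_const, Finset.card_univ] at h2'
    rw [zero_pow (NeZero.ne n)] at h2'
    exact zero_ne_one h2'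
  have hσκ := sigma_kappa n σ (xv m n i) (xv m n i') (hx0 i) hκ h1 h2 hP
  have hgen : ∀ (k : Fin m) (j : ZMod n), σ (σ (xv m n k j)) = xv m n k j := by
    intro k j
    by_cases hk : k = i
    · subst hk
      rw [h1 j, map_div₀, map_mul, h2 (j+1), add_sub_cancel_right, hσκ, hσκ]
      rw [div_mul_cancel₀ _ (hκ (j+1)), mul_div_cancel_right₀ _ (hκ j)]
    · by_cases hk' : k = i'
      · subst hk'
        rw [h2 j, map_div₀, map_mul, h1 (j-1), sub_add_cancel, hσκ, hσκ]
        rw [div_mul_cancel₀ _ (hκ (j-1)), mul_div_cancel_right₀ _ (hκ j)]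
      · rw [h3 k j hk hk', h3 k j hk hk']
  have hhom : (σ.toRingHom.comp σ.toRingHom).comp
      (algebraMap (MvPolynomial (Fin m × ZMod n) ℚ) (RF m n)) =
      (RingHom.id (RF m n)).comp (algebraMap (MvPolynomial (Fin m × ZMod n) ℚ) (RF m n)) := by
    apply MvPolynomial.ringHom_ext
    · intro q
      have hq : (algebraMap (MvPolynomial (Fin m × ZMod n) ℚ) (RF m n)) (MvPolynomial.C q) =
          ((q : ℚ) : RF m n) :=
        eq_ratCast ((algebraMap (MvPolynomial (Fin m × ZMod n) ℚ) (RF m n)).comp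
          (MvPolynomial.C : ℚ →+* MvPolynomial (Fin m × ZMod n) ℚ)) q
      simp only [RingHom.comp_apply, RingHom.id_apply, RingEquiv.toRingHom_eq_coe,
        RingHom.coe_coe, hq, map_ratCast]
    · intro p
      simp only [RingHom.comp_apply, RingHom.id_apply, RingEquiv.toRingHom_eq_coe,
        RingHom.coe_coe]
      exact hgen p.1 p.2
  intro z
  have := RingHom.congr_fun (IsLocalization.ringHom_ext
    (nonZeroDivisors (MvPolynomial (Fin m × ZMod n) ℚ)) hhom) z
  simpa using this
end

section
/- The loop elementary symmetric functions e_k^{(r)}(x_1,...,x_m) are invariant under each map s_i: s_i(e_k^{(r)}) = e_k^{(r)} for all k ≥ 0, all colors r, and all 1 ≤ i ≤ m-1. -/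
open Finset

/-!
Let `E_p` be `e_k^{(r)}` in the first `p` of the variables `x_0, …, x_{m-1}`. Splitting off the
largest index gives the Pascal recurrence `E_{p+1,k+1} = E_{p,k+1} + E_{p,k} x_p^{(r+k)}`; applied
twice it shows that `E_{i+2}` involves `x_i` and `x_{i+1}` beyond `E_i` only through
`x_i^{(j)} + x_{i+1}^{(j)}` and `x_i^{(j)} x_{i+1}^{(j+1)}`. The map `s_i` fixes the products
because the `κ`'s cancel, and fixes the sums because of the rotation identity
`x_{i+1}^{(r+1)} κ^{(r+1)} + ∏_c x_i^{(c)} = x_i^{(r)} κ^{(r)} + ∏_c x_{i+1}^{(c)}`.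
`E_i` and all other variables are fixed by `s_i`, so the recurrence carries the invariance from
`E_{i+2}` up to `E_m = e_k^{(r)}`.
-/

section KappaSeq

variable {M R : Type*} [CommMonoid M] [CommSemiring R]

lemma prod_Icc_add_one (u : ℕ → M) (a b : ℕ) :
    ∏ t ∈ Icc a b, u (t + 1) = ∏ t ∈ Icc (a + 1) (b + 1), u t := by
  rw [← Ico_add_one_right_eq_Icc, ← Ico_add_one_right_eq_Icc, prod_Ico_add']

lemma prod_Icc_one_eq_prod_range (u : ℕ → M) (N : ℕ) :
    ∏ t ∈ Icc 1 N, u t = ∏ t ∈ range N, u (t + 1) := by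
  rw [range_eq_Ico, prod_Ico_add', Ico_add_one_right_eq_Icc, zero_add]

/-- `kappa n xx yy r` is by definition `kappaSeq n (fun t => yy (r + t)) (fun t => xx (r + t))`. -/
def kappaSeq (N : ℕ) (u v : ℕ → R) : R :=
  ∑ j ∈ range N, (∏ t ∈ Icc 1 j, u t) * ∏ t ∈ Icc (j + 1) (N - 1), v t

lemma kappaSeq_rotate (N : ℕ) (u v : ℕ → R) (hv : v (N + 1) = v 0) :
    u 1 * kappaSeq (N + 1) (fun t => u (t + 1)) (fun t => v (t + 1)) + ∏ t ∈ range (N + 1), v t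
      = v 0 * kappaSeq (N + 1) u v + ∏ t ∈ range (N + 1), u (t + 1) := by
  -- Both sides are `∑_{j ≤ N + 1} T j`, split off at `T 0` and at `T (N + 1)` respectively.
  set T : ℕ → R := fun j => (∏ t ∈ Icc 1 j, u t) * ∏ t ∈ Icc (j + 1) (N + 1), v t
  have hshift : u 1 * kappaSeq (N + 1) (fun t => u (t + 1)) (fun t => v (t + 1))
      = ∑ j ∈ range (N + 1), T (j + 1) := by
    rw [kappaSeq, mul_sum]
    refine sum_congr rfl fun j _ => ?_
    rw [← mul_assoc, prod_Icc_add_one, prod_Icc_add_one, Nat.add_sub_cancel,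
      ← prod_insert (f := u) (by simp), insert_Icc_add_one_left_eq_Icc (by omega)]
  have hfix : v 0 * kappaSeq (N + 1) u v = ∑ j ∈ range (N + 1), T j := by
    rw [kappaSeq, mul_sum]
    refine sum_congr rfl fun j hj => ?_
    rw [← hv, mul_left_comm, mul_comm (v (N + 1)), Nat.add_sub_cancel,
      ← prod_Icc_succ_top (by simp at hj; omega)]
  have hT0 : T 0 = ∏ t ∈ range (N + 1), v t := by
    simp only [T, zero_add, prod_Icc_one_eq_prod_range, range_zero, prod_empty, one_mul]
    rw [prod_range_succ, prod_range_succ' v, hv]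
  have hTN : T (N + 1) = ∏ t ∈ range (N + 1), u (t + 1) := by
    simp [T, prod_Icc_one_eq_prod_range]
  rw [hshift, hfix, ← hT0, ← hTN, ← sum_range_succ', ← sum_range_succ]

end KappaSeq

section Kappa

variable {K : Type*} [Field K] {n : ℕ} [NeZero n]

lemma prod_range_add_natCast (f : ZMod n → K) (r : ZMod n) :
    ∏ t ∈ range n, f (r + t) = ∏ c, f c := by
  refine prod_nbij' (fun t => r + t) (fun c => (c - r).val) (fun _ _ => mem_univ _)
    (fun c _ => mem_range.2 (ZMod.val_lt _)) (fun t ht => ?_) (fun c _ => ?_) (fun _ _ => rfl)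
  · rw [add_sub_cancel_left, ZMod.val_natCast_of_lt (mem_range.1 ht)]
  · rw [ZMod.natCast_val, ZMod.cast_id, add_sub_cancel]

lemma kappa_rotate (xx yy : ZMod n → K) (r : ZMod n) :
    yy (r + 1) * kappa n xx yy (r + 1) + ∏ c, xx c = xx r * kappa n xx yy r + ∏ c, yy c := by
  obtain ⟨N, rfl⟩ := Nat.exists_eq_succ_of_ne_zero (NeZero.ne n)
  have hshift : ∀ (f : ZMod (N + 1) → K) (t : ℕ),
      f (r + ((t + 1 : ℕ) : ZMod (N + 1))) = f (r + 1 + t) :=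
    fun f t => by push_cast; ring_nf
  have key := kappaSeq_rotate N (fun t => yy (r + t)) (fun t => xx (r + t))
    (by simp only [ZMod.natCast_self, Nat.cast_zero])
  simp only [hshift, Nat.cast_zero, Nat.cast_one, add_zero, prod_range_add_natCast] at key
  exact key

end Kappa

section Swap

variable {K : Type*} [Field K] {n : ℕ} {xx yy : ZMod n → K} {σ : K →+* K}

lemma map_add_map_of_kappa [NeZero n] (hκ : ∀ r, kappa n xx yy r ≠ 0)
    (h1 : ∀ j, σ (xx j) = yy (j + 1) * kappa n xx yy (j + 1) / kappa n xx yy j)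
    (h2 : ∀ j, σ (yy j) = xx (j - 1) * kappa n xx yy (j - 1) / kappa n xx yy j)
    (r : ZMod n) : σ (xx r) + σ (yy r) = xx r + yy r := by
  have hr := kappa_rotate xx yy r
  have hr' := kappa_rotate xx yy (r - 1)
  rw [sub_add_cancel] at hr'
  rw [h1, h2, ← add_div, div_eq_iff (hκ r)]
  linear_combination hr - hr'

lemma map_mul_map_of_kappa (hκ : ∀ r, kappa n xx yy r ≠ 0)
    (h1 : ∀ j, σ (xx j) = yy (j + 1) * kappa n xx yy (j + 1) / kappa n xx yy j)
    (h2 : ∀ j, σ (yy j) = xx (j - 1) * kappa n xx yy (j - 1) / kappa n xx yy j)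
    (r : ZMod n) : σ (xx r) * σ (yy (r + 1)) = xx r * yy (r + 1) := by
  rw [h1, h2, add_sub_cancel_right, div_mul_div_comm,
    div_eq_iff (mul_ne_zero (hκ r) (hκ (r + 1)))]
  ring

end Swap

lemma Fin.strictMono_snoc_iff {α : Type*} [Preorder α] {k : ℕ} (g : Fin k → α) (a : α) :
    StrictMono (Fin.snoc g a : Fin (k + 1) → α) ↔ StrictMono g ∧ ∀ t, g t < a := by
  refine ⟨fun h => ⟨fun s t hst => ?_, fun t => ?_⟩, fun ⟨hg, ha⟩ s t hst => ?_⟩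
  · simpa using h (Fin.castSucc_lt_castSucc_iff.2 hst)
  · simpa using h (Fin.castSucc_lt_last t)
  · obtain ⟨s, rfl⟩ := Fin.exists_castSucc_eq.2 (Fin.ne_last_of_lt hst)
    induction t using Fin.lastCases with
    | last => simpa using ha s
    | cast t => simpa using hg (Fin.castSucc_lt_castSucc_iff.1 hst)

section LoopETrunc

variable {K : Type*} [Field K] {m n : ℕ}

open Classical in
def loopETrunc (m n : ℕ) (x : Fin m → ZMod n → K) (p k : ℕ) (r : ZMod n) : K :=
  ∑ f ∈ univ.filter (fun f : Fin k → Fin m => StrictMono f ∧ ∀ t, (f t : ℕ) < p),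
    ∏ t : Fin k, x (f t) (r + ((t : ℕ) : ZMod n))

lemma loopETrunc_self (x : Fin m → ZMod n → K) (k : ℕ) (r : ZMod n) :
    loopETrunc m n x m k r = loopE m n x k r := by
  classical
  exact sum_congr (filter_congr fun f _ => and_iff_left fun t => (f t).is_lt) fun _ _ => rfl

lemma loopETrunc_zero (x : Fin m → ZMod n → K) (p : ℕ) (r : ZMod n) :
    loopETrunc m n x p 0 r = 1 := by
  simp [loopETrunc, Subsingleton.strictMono]

lemma loopETrunc_succ (x : Fin m → ZMod n → K) (p k : ℕ) (r : ZMod n) :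
    loopETrunc m n x p (k + 1) r
      = ∑ a ∈ univ.filter (fun a : Fin m => (a : ℕ) < p),
          loopETrunc m n x a k r * x a (r + k) := by
  classical
  rw [loopETrunc, sum_filter, ← (Fin.snocEquiv fun _ => Fin m).sum_comp, Fintype.sum_prod_type,
    sum_filter]
  refine sum_congr rfl fun a _ => ?_
  split_ifs with ha
  · rw [loopETrunc, sum_filter, sum_mul]
    refine sum_congr rfl fun g _ => ?_
    simp only [Fin.snocEquiv, Equiv.coe_fn_mk, Fin.prod_univ_castSucc, Fin.snoc_castSucc,
      Fin.snoc_last, Fin.val_castSucc, Fin.val_last]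
    rw [ite_zero_mul]
    refine if_congr ?_ rfl rfl
    simp only [Fin.strictMono_snoc_iff, Fin.forall_fin_succ', Fin.snoc_castSucc, Fin.snoc_last]
    exact ⟨fun h => h.1, fun h => ⟨h, fun t => (h.2 t).trans ha, ha⟩⟩
  · refine sum_eq_zero fun g _ => if_neg fun h => ha ?_
    simpa using h.2 (Fin.last k)

lemma loopETrunc_succ_succ (x : Fin m → ZMod n → K) (a : Fin m) (k : ℕ) (r : ZMod n) :
    loopETrunc m n x (a + 1) (k + 1) r
      = loopETrunc m n x a (k + 1) r + loopETrunc m n x a k r * x a (r + k) := by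
  have hlt : univ.filter (fun b : Fin m => (b : ℕ) < a + 1)
      = insert a (univ.filter fun b : Fin m => (b : ℕ) < a) := by
    ext b
    simp only [mem_filter, mem_univ, true_and, mem_insert, Fin.ext_iff]
    omega
  rw [loopETrunc_succ, loopETrunc_succ, hlt, sum_insert (by simp), add_comm]

variable {σ : K →+* K} (x : Fin m → ZMod n → K)

lemma map_loopETrunc_of_forall_lt {p : ℕ}
    (hx : ∀ a : Fin m, (a : ℕ) < p → ∀ j, σ (x a j) = x a j) (k : ℕ) (r : ZMod n) : σ (loopETrunc m n x p k r) = loopETrunc m n x p k r := by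
  rw [loopETrunc, map_sum]
  refine sum_congr rfl fun f hf => ?_
  rw [map_prod]
  exact prod_congr rfl fun t _ => hx _ ((mem_filter.1 hf).2.2 t) _

lemma map_loopETrunc_succ_of_fixed (a : Fin m)
    (hE : ∀ k r, σ (loopETrunc m n x a k r) = loopETrunc m n x a k r)
    (hx : ∀ j, σ (x a j) = x a j) (k : ℕ) (r : ZMod n) :
    σ (loopETrunc m n x (a + 1) k r) = loopETrunc m n x (a + 1) k r := by
  cases k with
  | zero => rw [loopETrunc_zero, map_one]
  | succ k => rw [loopETrunc_succ_succ, map_add, map_mul, hE, hE, hx]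

lemma map_loopETrunc_add_two (i i' : Fin m) (hii' : (i' : ℕ) = i + 1)
    (hE : ∀ k r, σ (loopETrunc m n x i k r) = loopETrunc m n x i k r)
    (hadd : ∀ j, σ (x i j) + σ (x i' j) = x i j + x i' j)
    (hmul : ∀ j, σ (x i j) * σ (x i' (j + 1)) = x i j * x i' (j + 1)) (k : ℕ) (r : ZMod n) :
    σ (loopETrunc m n x (i + 2) k r) = loopETrunc m n x (i + 2) k r := by
  have hpascal : ∀ k, loopETrunc m n x (i + 2) (k + 1) r
      = loopETrunc m n x (i + 1) (k + 1) r + loopETrunc m n x (i + 1) k r * x i' (r + k) := by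
    intro k
    rw [show (i : ℕ) + 2 = i' + 1 by omega, loopETrunc_succ_succ, hii']
  rcases k with _ | _ | k
  · rw [loopETrunc_zero, map_one]
  · rw [hpascal, loopETrunc_succ_succ, loopETrunc_zero, loopETrunc_zero]
    simp only [map_add, map_mul, map_one, hE]
    linear_combination hadd (r + (0 : ℕ))
  · rw [hpascal, loopETrunc_succ_succ, loopETrunc_succ_succ]
    simp only [map_add, map_mul, hE]
    have hmul_k := hmul (r + k)
    rw [add_assoc, ← Nat.cast_add_one] at hmul_k
    linear_combination loopETrunc m n x i (k + 1) r * hadd (r + (k + 1 : ℕ))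
      + loopETrunc m n x i k r * hmul_k

end LoopETrunc

/-- Invariance of loop elementary symmetric functions under the birational map `s_i`. -/
theorem statement10 {K : Type*} [Field K] (m n : ℕ) [NeZero n] (x : Fin m → ZMod n → K)
    (i i' : Fin m) (hii' : (i' : ℕ) = (i : ℕ) + 1)
    (hκ : ∀ r, kappa n (x i) (x i') r ≠ 0)
    (σ : K →+* K)
    (h1 : ∀ j, σ (x i j) =
      x i' (j + 1) * kappa n (x i) (x i') (j + 1) / kappa n (x i) (x i') j)
    (h2 : ∀ j, σ (x i' j) =
      x i (j - 1) * kappa n (x i) (x i') (j - 1) / kappa n (x i) (x i') j)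
    (h3 : ∀ k j, k ≠ i → k ≠ i' → σ (x k j) = x k j) :
    ∀ (k : ℕ) (r : ZMod n), σ (loopE m n x k r) = loopE m n x k r := by
  have hbelow : ∀ k r, σ (loopETrunc m n x i k r) = loopETrunc m n x i k r :=
    map_loopETrunc_of_forall_lt x fun a ha j =>
      h3 a j (fun h => by simp [h] at ha) (fun h => by rw [h, hii'] at ha; omega)
  have habove : ∀ p, (i : ℕ) + 2 ≤ p → p ≤ m →
      ∀ k r, σ (loopETrunc m n x p k r) = loopETrunc m n x p k r := by
    intro p hp
    induction p, hp using Nat.le_induction with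
    | base =>
      exact fun _ => map_loopETrunc_add_two x i i' hii' hbelow
        (map_add_map_of_kappa hκ h1 h2) (map_mul_map_of_kappa hκ h1 h2)
    | succ p hp ih =>
      intro hpm
      have hpi : (⟨p, by omega⟩ : Fin m) ≠ i := Fin.ne_of_val_ne (by simp only; omega)
      have hpi' : (⟨p, by omega⟩ : Fin m) ≠ i' := Fin.ne_of_val_ne (by simp only; omega)
      exact map_loopETrunc_succ_of_fixed x ⟨p, by omega⟩ (ih (by omega))
        (fun j => h3 _ j hpi hpi')
  intro k r
  rw [← loopETrunc_self]
  exact habove m (by omega) le_rfl k r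
end

section
/- The loop homogeneous symmetric functions h_k^{(r)}(x_1,...,x_m) are invariant under each map s_i. -/
open Finset

/-!
Sort the weakly increasing index sequences of `h_k^{(r)}(x_1, …, x_m)` by how many indices fall
in each row: peeling off rows one at a time writes `h_k^{(r)}` as a sum of products of
`h^{(·)}` in the rows below `i`, the two-row function `h_b^{(·)}(x_i, x_{i+1})`, and single rows
above `i + 1`, with shifted colors. The map `s_i` fixes every row other than `i, i + 1`, so it
remains to see that `h_b^{(r)}(x_i, x_{i+1})` is invariant. This goes by induction on `b` from
`h_{b+1}^{(r)} = x_{i+1}^{(r)} h_b^{(r+1)} + x_i^{(r)} ⋯ x_i^{(r+b)}`: the product telescopes under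
`s_i` to `x_{i+1}^{(r+1)} ⋯ x_{i+1}^{(r+b+1)} κ^{(r+b+1)} / κ^{(r)}`, and everything is controlled
by the fact that `x_i^{(c-1)} κ^{(c-1)} - x_{i+1}^{(c)} κ^{(c)} = π(x_i) - π(x_{i+1})` does not
depend on `c`.
-/

lemma Fin.monotone_snoc_iff {α : Type*} [Preorder α] {k : ℕ} (g : Fin k → α) (a : α) :
    Monotone (Fin.snoc g a : Fin (k + 1) → α) ↔ Monotone g ∧ ∀ t, g t ≤ a := by
  constructor
  · intro h
    refine ⟨fun s t hst => ?_, fun t => ?_⟩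
    · simpa using h (Fin.castSucc_le_castSucc_iff.2 hst)
    · simpa using h (Fin.le_last t.castSucc)
  · rintro ⟨hg, ha⟩ s t hst
    induction t using Fin.lastCases with
    | last => induction s using Fin.lastCases <;> simp [ha]
    | cast t =>
      induction s using Fin.lastCases with
      | last => exact absurd hst (not_le.2 (Fin.castSucc_lt_last t))
      | cast s => simpa using hg (Fin.castSucc_le_castSucc_iff.1 hst)

lemma Finset.Nat.sum_antidiagonal_antidiagonal {M : Type*} [AddCommMonoid M]
    (f : ℕ → ℕ → ℕ → M) (k : ℕ) :
    ∑ p ∈ antidiagonal k, ∑ q ∈ antidiagonal p.1, f q.1 q.2 p.2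
      = ∑ p ∈ antidiagonal k, ∑ q ∈ antidiagonal p.2, f p.1 q.1 q.2 := by
  rw [sum_sigma', sum_sigma']
  refine sum_nbij' (fun x => ⟨(x.2.1, x.2.2 + x.1.2), (x.2.2, x.1.2)⟩)
    (fun x => ⟨(x.1.1 + x.2.1, x.2.2), (x.1.1, x.2.1)⟩) ?_ ?_ ?_ ?_ ?_ <;>
    rintro ⟨⟨a, b⟩, ⟨c, d⟩⟩ h <;>
    simp only [mem_sigma, HasAntidiagonal.mem_antidiagonal, and_true] at h ⊢ <;>
    obtain ⟨h, rfl⟩ := h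
  · omega
  · omega
  all_goals rfl

section Kappa

variable {K : Type*} [Field K] {n : ℕ}

@[simp]
lemma singleH_zero (y : ZMod n → K) (b : ZMod n) : singleH n y 0 b = 1 := by
  simp [singleH]

lemma singleH_succ (y : ZMod n → K) (a : ℕ) (b : ZMod n) :
    singleH n y (a + 1) b = singleH n y a b * y (b + a) := by
  simp [singleH, prod_range_succ]

lemma singleH_succ' (y : ZMod n → K) (a : ℕ) (b : ZMod n) :
    singleH n y (a + 1) b = y b * singleH n y a (b + 1) := by
  simp only [singleH, prod_range_succ', Nat.cast_zero, add_zero, Nat.cast_succ]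
  rw [mul_comm]
  simp only [add_assoc, add_comm (1 : ZMod n)]

lemma singleH_self [NeZero n] (y : ZMod n → K) (b : ZMod n) : singleH n y n b = pivar n y := by
  refine prod_nbij' (fun s => b + (s : ZMod n)) (fun c => (c - b).val)
    (fun _ _ => mem_univ _) (fun _ _ => mem_range.2 (ZMod.val_lt _))
    (fun a ha => ?_) (fun c _ => ?_) (fun _ _ => rfl)
  · rw [add_sub_cancel_left, ZMod.val_natCast_of_lt (mem_range.1 ha)]
  · rw [ZMod.natCast_zmod_val, add_sub_cancel]

lemma kappa_eq_sum_singleH (xx yy : ZMod n → K) (r : ZMod n) :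
    kappa n xx yy r = ∑ j ∈ range n,
      singleH n yy j (r + 1) * singleH n xx (n - 1 - j) (r + j + 1) := by
  refine sum_congr rfl fun j _ => ?_
  rw [← Ico_add_one_right_eq_Icc, ← Ico_add_one_right_eq_Icc, prod_Ico_eq_prod_range,
    prod_Ico_eq_prod_range, show n - 1 + 1 - (j + 1) = n - 1 - j by omega]
  simp only [singleH, Nat.cast_add, Nat.cast_one]
  congr 1 <;> refine prod_congr rfl fun t _ => congrArg _ (by ring)

/-- With `T j = y^{(c)} ⋯ y^{(c+j-1)} x^{(c+j)} ⋯ x^{(c-1)}`, the left side telescopes: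
`x^{(c-1)} κ^{(c-1)} = ∑_{j < n} T j` and `y^{(c)} κ^{(c)} = ∑_{j < n} T (j + 1)`. -/
lemma x_mul_kappa_sub_y_mul_kappa [NeZero n] (xx yy : ZMod n → K) (c : ZMod n) :
    xx (c - 1) * kappa n xx yy (c - 1) - yy c * kappa n xx yy c = pivar n xx - pivar n yy := by
  set T : ℕ → K := fun j => singleH n yy j c * singleH n xx (n - j) (c + j)
  have hx : xx (c - 1) * kappa n xx yy (c - 1) = ∑ j ∈ range n, T j := by
    rw [kappa_eq_sum_singleH, mul_sum]
    refine sum_congr rfl fun j hj => ?_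
    have hjn : j + (n - 1 - j) + 1 = n := by have := mem_range.1 hj; omega
    have hcast : c + j + (n - 1 - j : ℕ) = c - 1 := by
      have := congrArg (Nat.cast : ℕ → ZMod n) hjn
      push_cast [ZMod.natCast_self] at this
      linear_combination this
    simp only [T, show n - j = n - 1 - j + 1 by omega, singleH_succ, sub_add_cancel,
      show c - 1 + j + 1 = c + j by ring, hcast]
    ring
  have hy : yy c * kappa n xx yy c = ∑ j ∈ range n, T (j + 1) := by
    rw [kappa_eq_sum_singleH, mul_sum]
    refine sum_congr rfl fun j _ => ?_
    simp only [T, singleH_succ', show n - (j + 1) = n - 1 - j by omega, Nat.cast_succ, add_assoc]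
    ring
  rw [hx, hy, ← sum_sub_distrib, sum_range_sub']
  simp [T, singleH_self]

end Kappa

/-- `h_k^{(r)}` in the two rows of variables `xx` (lower index) and `yy` (upper index). -/
def loopHPair {K : Type*} [Field K] (n : ℕ) (xx yy : ZMod n → K) (k : ℕ) (r : ZMod n) : K :=
  ∑ q ∈ antidiagonal k, singleH n xx q.1 (r + q.2) * singleH n yy q.2 r

section LoopHPair

variable {K : Type*} [Field K] {n : ℕ} (xx yy : ZMod n → K)

@[simp]
lemma loopHPair_zero (r : ZMod n) : loopHPair n xx yy 0 r = 1 := by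
  simp [loopHPair]

lemma loopHPair_succ (k : ℕ) (r : ZMod n) :
    loopHPair n xx yy (k + 1) r = xx (r + k) * loopHPair n xx yy k r + singleH n yy (k + 1) r := by
  rw [loopHPair, Nat.sum_antidiagonal_succ, add_comm, loopHPair, mul_sum]
  congr 1
  · refine sum_congr rfl fun q hq => ?_
    rw [singleH_succ, ← mem_antidiagonal.1 hq]
    push_cast
    ring_nf
  · simp

lemma loopHPair_succ' (k : ℕ) (r : ZMod n) :
    loopHPair n xx yy (k + 1) r = yy r * loopHPair n xx yy k (r + 1) + singleH n xx (k + 1) r := by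
  rw [loopHPair, Nat.sum_antidiagonal_succ', add_comm, loopHPair, mul_sum]
  congr 1
  · refine sum_congr rfl fun q _ => ?_
    rw [singleH_succ']
    push_cast
    ring_nf
  · simp

lemma kappa_mul_singleH_sub_singleH_mul_kappa [NeZero n] (k : ℕ) (r : ZMod n) :
    kappa n xx yy r * singleH n xx (k + 1) r
        - singleH n yy (k + 1) (r + 1) * kappa n xx yy (r + (k + 1))
      = (pivar n xx - pivar n yy) * loopHPair n xx yy k (r + 1) := by
  induction k with
  | zero =>
    have := x_mul_kappa_sub_y_mul_kappa xx yy (r + 1)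
    simp only [add_sub_cancel_right] at this
    simp only [zero_add, singleH_succ, singleH_zero, one_mul, Nat.cast_zero, add_zero, mul_one,
      loopHPair_zero]
    linear_combination this
  | succ k ih =>
    have hdiff := x_mul_kappa_sub_y_mul_kappa xx yy (r + (k + 1 + 1))
    rw [singleH_succ xx (k + 1), singleH_succ yy (k + 1), loopHPair_succ]
    push_cast at hdiff ⊢
    rw [show r + (k + 1 + 1) - 1 = r + (k + 1) by ring] at hdiff
    rw [show r + 1 + (k + 1) = r + (k + 1 + 1) by ring, show r + 1 + k = r + (k + 1) by ring]
    linear_combination xx (r + (k + 1)) * ih + singleH n yy (k + 1) (r + 1) * hdiff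

variable (σ : K →+* K) (hκ : ∀ r, kappa n xx yy r ≠ 0)
  (hx : ∀ j, σ (xx j) = yy (j + 1) * kappa n xx yy (j + 1) / kappa n xx yy j)
  (hy : ∀ j, σ (yy j) = xx (j - 1) * kappa n xx yy (j - 1) / kappa n xx yy j)
include hκ

include hx in
lemma map_singleH_mul_kappa (a : ℕ) (b : ZMod n) :
    σ (singleH n xx a b) * kappa n xx yy b = singleH n yy a (b + 1) * kappa n xx yy (b + a) := by
  induction a with
  | zero => simp
  | succ a ih =>
    have := hκ (b + a)
    rw [singleH_succ, map_mul, hx, singleH_succ]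
    push_cast
    rw [show b + 1 + a = b + a + 1 by ring, show b + (a + 1) = b + a + 1 by ring]
    field_simp
    linear_combination yy (b + a + 1) * kappa n xx yy (b + a + 1) * ih

include hx hy in
lemma map_loopHPair [NeZero n] (k : ℕ) (r : ZMod n) :
    σ (loopHPair n xx yy k r) = loopHPair n xx yy k r := by
  induction k generalizing r with
  | zero => simp
  | succ k ih =>
    have := hκ r
    have hsingle := map_singleH_mul_kappa xx yy σ hκ hx (k + 1) r
    rw [loopHPair_succ', map_add, map_mul, ih, hy]
    push_cast at hsingle
    field_simp
    linear_combination hsingle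
      + loopHPair n xx yy k (r + 1) * x_mul_kappa_sub_y_mul_kappa xx yy r
      - kappa_mul_singleH_sub_singleH_mul_kappa xx yy k r

end LoopHPair

def loopHBelow {K : Type*} [Field K] {m n : ℕ} (x : Fin m → ZMod n → K) (m' k : ℕ)
    (r : ZMod n) : K :=
  ∑ f ∈ univ.filter (fun f : Fin k → Fin m => Monotone f ∧ ∀ t, (f t : ℕ) < m'),
    ∏ t : Fin k, x (f t) (r + ((k - 1 - t : ℕ) : ZMod n))

section LoopHBelow

variable {K : Type*} [Field K] {m n : ℕ} (x : Fin m → ZMod n → K)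

lemma loopH_eq_loopHBelow (k : ℕ) (r : ZMod n) : loopH m n x k r = loopHBelow x m k r := by
  unfold loopH loopHBelow
  exact sum_congr (filter_congr fun f _ => (and_iff_left fun t => (f t).isLt).symm) fun _ _ => rfl

@[simp]
lemma loopHBelow_zero (m' : ℕ) (r : ZMod n) : loopHBelow x m' 0 r = 1 := by
  simp [loopHBelow, Subsingleton.monotone]

lemma loopHBelow_zero_succ (k : ℕ) (r : ZMod n) : loopHBelow x 0 (k + 1) r = 0 := by
  simp [loopHBelow]

lemma loopHBelow_succ_succ (j : Fin m) (k : ℕ) (r : ZMod n) :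
    loopHBelow x (j + 1) (k + 1) r
      = loopHBelow x j (k + 1) r + x j r * loopHBelow x (j + 1) k (r + 1) := by
  unfold loopHBelow
  rw [← sum_filter_not_add_sum_filter _ (fun f => f (Fin.last k) = j)]
  congr 1
  · rw [filter_filter]
    refine sum_congr (filter_congr fun f _ => ?_) fun _ _ => rfl
    constructor
    · rintro ⟨⟨hf, hlt⟩, hne⟩
      refine ⟨hf, fun t => lt_of_le_of_lt (hf (Fin.le_last t)) ?_⟩
      have := Fin.val_ne_of_ne hne
      have := hlt (Fin.last k)
      omega
    · rintro ⟨hf, hlt⟩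
      exact ⟨⟨hf, fun t => (hlt t).trans (Nat.lt_succ_self _)⟩,
        fun h => (hlt (Fin.last k)).ne (congrArg Fin.val h)⟩
  · rw [mul_sum, filter_filter]
    symm
    refine sum_nbij' (fun g => Fin.snoc g j) Fin.init ?_ ?_ ?_ ?_ ?_
    · intro g hg
      simp only [mem_filter, mem_univ, true_and, Fin.monotone_snoc_iff] at hg ⊢
      refine ⟨⟨⟨hg.1, fun t => Fin.le_iff_val_le_val.2 (Nat.lt_succ_iff.1 (hg.2 t))⟩,
        fun t => ?_⟩, Fin.snoc_last _ _⟩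
      induction t using Fin.lastCases <;> simp [hg.2]
    · intro f hf
      simp only [mem_filter, mem_univ, true_and] at hf ⊢
      exact ⟨hf.1.1.comp Fin.strictMono_castSucc.monotone, fun t => hf.1.2 _⟩
    · intro g _
      exact Fin.init_snoc _ _
    · intro f hf
      simp only [mem_filter, mem_univ, true_and] at hf
      rw [← hf.2]
      exact Fin.snoc_init_self f
    · intro g _
      simp only [Fin.prod_univ_castSucc, Fin.snoc_castSucc, Fin.snoc_last, Fin.val_last,
        Fin.val_castSucc]
      rw [mul_comm, Nat.add_sub_cancel, Nat.sub_self, Nat.cast_zero, add_zero]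
      congr 1
      refine prod_congr rfl fun t _ => congrArg _ ?_
      rw [show k - t = k - 1 - t + 1 by omega]
      push_cast
      ring

lemma loopHBelow_succ (j : Fin m) (k : ℕ) (r : ZMod n) :
    loopHBelow x (j + 1) k r
      = ∑ p ∈ antidiagonal k, loopHBelow x j p.1 (r + p.2) * singleH n (x j) p.2 r := by
  induction k generalizing r with
  | zero => simp
  | succ k ih =>
    rw [loopHBelow_succ_succ, ih, Nat.sum_antidiagonal_succ', mul_sum]
    simp only [Nat.cast_zero, add_zero, singleH_zero, mul_one, singleH_succ', Nat.cast_succ]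
    congr 1
    refine sum_congr rfl fun q _ => ?_
    rw [add_comm (q.2 : ZMod n) 1, ← add_assoc]
    ring

lemma loopHBelow_add_two (i i' : Fin m) (hii' : (i' : ℕ) = i + 1) (k : ℕ) (r : ZMod n) :
    loopHBelow x (i + 2) k r
      = ∑ p ∈ antidiagonal k,
          loopHBelow x i p.1 (r + p.2) * loopHPair n (x i) (x i') p.2 r := by
  set f : ℕ → ℕ → ℕ → K := fun a b c =>
    loopHBelow x i a (r + (b + c : ℕ)) * singleH n (x i) b (r + c) * singleH n (x i') c r
  calc loopHBelow x (i + 2) k r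
      = ∑ p ∈ antidiagonal k, ∑ q ∈ antidiagonal p.1, f q.1 q.2 p.2 := by
        rw [show (i : ℕ) + 2 = i' + 1 by omega, loopHBelow_succ]
        refine sum_congr rfl fun p _ => ?_
        rw [hii', loopHBelow_succ, sum_mul]
        refine sum_congr rfl fun q _ => ?_
        simp only [f]
        push_cast
        ring_nf
    _ = ∑ p ∈ antidiagonal k, ∑ q ∈ antidiagonal p.2, f p.1 q.1 q.2 :=
        Nat.sum_antidiagonal_antidiagonal f k
    _ = _ := by
        refine sum_congr rfl fun p _ => ?_
        rw [loopHPair, mul_sum]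
        refine sum_congr rfl fun q hq => ?_
        simp only [f, ← mem_antidiagonal.1 hq]
        ring

end LoopHBelow

section Invariance

variable {K : Type*} [Field K] {m n : ℕ} (x : Fin m → ZMod n → K) (σ : K →+* K)

lemma map_loopHBelow_succ (j : Fin m) (hxj : ∀ c, σ (x j c) = x j c)
    (hJ : ∀ k r, σ (loopHBelow x j k r) = loopHBelow x j k r) (k : ℕ) (r : ZMod n) :
    σ (loopHBelow x (j + 1) k r) = loopHBelow x (j + 1) k r := by
  induction k generalizing r with
  | zero => simp
  | succ k ih => rw [loopHBelow_succ_succ, map_add, map_mul, hJ, hxj, ih]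

lemma map_loopHBelow [NeZero n] (i i' : Fin m) (hii' : (i' : ℕ) = i + 1)
    (hκ : ∀ r, kappa n (x i) (x i') r ≠ 0)
    (hi : ∀ j, σ (x i j) =
      x i' (j + 1) * kappa n (x i) (x i') (j + 1) / kappa n (x i) (x i') j)
    (hi' : ∀ j, σ (x i' j) =
      x i (j - 1) * kappa n (x i) (x i') (j - 1) / kappa n (x i) (x i') j)
    (hfix : ∀ l j, l ≠ i → l ≠ i' → σ (x l j) = x l j) (m' : ℕ) (hm' : m' ≤ m)
    (hne : m' ≠ i + 1) (k : ℕ) (r : ZMod n) :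
    σ (loopHBelow x m' k r) = loopHBelow x m' k r := by
  induction m' using Nat.strong_induction_on generalizing k r with
  | _ m' ih =>
  rcases m' with _ | p
  · cases k <;> simp [loopHBelow_zero_succ]
  · by_cases hp : p = i + 1
    · subst hp
      rw [loopHBelow_add_two x i i' hii', map_sum]
      refine sum_congr rfl fun q _ => ?_
      rw [map_mul, ih i (by omega) (by omega) (by omega),
        map_loopHPair (x i) (x i') σ hκ hi hi']
    · have hpi : (⟨p, by omega⟩ : Fin m) ≠ i := Fin.ne_of_val_ne (by simp only; omega)
      have hpi' : (⟨p, by omega⟩ : Fin m) ≠ i' := Fin.ne_of_val_ne (by simp only; omega)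
      exact map_loopHBelow_succ x σ ⟨p, by omega⟩ (hfix _ · hpi hpi')
        (ih p (by omega) (by omega) hp) k r

end Invariance

/-- Invariance of loop homogeneous symmetric functions under the birational map `s_i`. -/
theorem statement11 {K : Type*} [Field K] (m n : ℕ) [NeZero n] (x : Fin m → ZMod n → K)
    (i i' : Fin m) (hii' : (i' : ℕ) = (i : ℕ) + 1)
    (hκ : ∀ r, kappa n (x i) (x i') r ≠ 0)
    (σ : K →+* K)
    (h1 : ∀ j, σ (x i j) =
      x i' (j + 1) * kappa n (x i) (x i') (j + 1) / kappa n (x i) (x i') j)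
    (h2 : ∀ j, σ (x i' j) =
      x i (j - 1) * kappa n (x i) (x i') (j - 1) / kappa n (x i) (x i') j)
    (h3 : ∀ k j, k ≠ i → k ≠ i' → σ (x k j) = x k j) :
    ∀ (k : ℕ) (r : ZMod n), σ (loopH m n x k r) = loopH m n x k r := by
  intro k r
  rw [loopH_eq_loopHBelow]
  exact map_loopHBelow x σ i i' hii' hκ h1 h2 h3 m le_rfl (by omega) k r
end

section
/- For the birational map s_i and the products π_j = x_j^{(1)} x_j^{(2)} ⋯ x_j^{(n)}, one has s_i(π_i) = π_{i+1}, s_i(π_{i+1}) = π_i, and s_i(π_j) = π_j for j ≠ i, i+1. Consequently, for every σ in the symmetric group S_m acting via products of the s_i, σ(π_i) = π_{σ(i)}. -/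
open Finset

/-- The birational maps `s_i` permute the products `π_j = x_j^{(1)} ⋯ x_j^{(n)}`:
`s_i(π_i) = π_{i+1}`, `s_i(π_{i+1}) = π_i`, `s_i(π_j) = π_j` otherwise; consequently any
composition of the maps `s_i` sends `π_i` to `π_{σ(i)}` for the corresponding
permutation `σ ∈ S_m`. -/
theorem statement12 {K : Type*} [Field K] (m n : ℕ) [NeZero n] (x : Fin m → ZMod n → K)
    (σ : (l : Fin m) → ((l : ℕ) + 1 < m) → (K →+* K))
    (hκ : ∀ (l : Fin m) (hl : (l : ℕ) + 1 < m) (r : ZMod n),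
      kappa n (x l) (x ⟨(l : ℕ) + 1, hl⟩) r ≠ 0)
    (h1 : ∀ (l : Fin m) (hl : (l : ℕ) + 1 < m) (j : ZMod n),
      σ l hl (x l j) =
        x ⟨(l : ℕ) + 1, hl⟩ (j + 1) * kappa n (x l) (x ⟨(l : ℕ) + 1, hl⟩) (j + 1) /
          kappa n (x l) (x ⟨(l : ℕ) + 1, hl⟩) j)
    (h2 : ∀ (l : Fin m) (hl : (l : ℕ) + 1 < m) (j : ZMod n),
      σ l hl (x ⟨(l : ℕ) + 1, hl⟩ j) =
        x l (j - 1) * kappa n (x l) (x ⟨(l : ℕ) + 1, hl⟩) (j - 1) /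
          kappa n (x l) (x ⟨(l : ℕ) + 1, hl⟩) j)
    (h3 : ∀ (l : Fin m) (hl : (l : ℕ) + 1 < m) (k : Fin m) (j : ZMod n),
      k ≠ l → k ≠ ⟨(l : ℕ) + 1, hl⟩ → σ l hl (x k j) = x k j) :
    (∀ (l : Fin m) (hl : (l : ℕ) + 1 < m),
      σ l hl (pivar n (x l)) = pivar n (x ⟨(l : ℕ) + 1, hl⟩) ∧
      σ l hl (pivar n (x ⟨(l : ℕ) + 1, hl⟩)) = pivar n (x l) ∧
      ∀ k : Fin m, k ≠ l → k ≠ ⟨(l : ℕ) + 1, hl⟩ →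
        σ l hl (pivar n (x k)) = pivar n (x k)) ∧
    ∀ (L : List {l : Fin m // (l : ℕ) + 1 < m}) (i : Fin m),
      (L.foldr (fun l f => (σ l.1 l.2).comp f) (RingHom.id K)) (pivar n (x i)) =
        pivar n (x ((L.map fun l => Equiv.swap l.1 ⟨(l.1 : ℕ) + 1, l.2⟩).prod i)) := by
  have key : ∀ (l : Fin m) (hl : (l : ℕ) + 1 < m),
      σ l hl (pivar n (x l)) = pivar n (x ⟨(l : ℕ) + 1, hl⟩) ∧
      σ l hl (pivar n (x ⟨(l : ℕ) + 1, hl⟩)) = pivar n (x l) ∧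
      ∀ k : Fin m, k ≠ l → k ≠ ⟨(l : ℕ) + 1, hl⟩ →
        σ l hl (pivar n (x k)) = pivar n (x k) := by
    intro l hl
    set l' : Fin m := ⟨(l : ℕ) + 1, hl⟩ with hl'
    have hκne : (∏ j : ZMod n, kappa n (x l) (x l') j) ≠ 0 :=
      Finset.prod_ne_zero_iff.2 fun j _ => hκ l hl j
    have hshift : ∀ c : ZMod n, ∀ g : ZMod n → K,
        (∏ j : ZMod n, g (j + c)) = ∏ j : ZMod n, g j := by
      intro c g
      exact Fintype.prod_equiv (Equiv.addRight c) _ _ (fun j => rfl)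
    refine ⟨?_, ?_, ?_⟩
    · have e1 : σ l hl (pivar n (x l)) =
          ∏ j : ZMod n, (x l' (j + 1) * kappa n (x l) (x l') (j + 1) /
            kappa n (x l) (x l') j) := by
        rw [pivar, map_prod]
        exact Finset.prod_congr rfl fun j _ => h1 l hl j
      rw [e1, Finset.prod_div_distrib, Finset.prod_mul_distrib,
        hshift 1 (fun j => kappa n (x l) (x l') j),
        hshift 1 (fun j => x l' j), mul_div_assoc, div_self hκne, mul_one, pivar]
    · have e1 : σ l hl (pivar n (x l')) =
          ∏ j : ZMod n, (x l (j - 1) * kappa n (x l) (x l') (j - 1) /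
            kappa n (x l) (x l') j) := by
        rw [pivar, map_prod]
        exact Finset.prod_congr rfl fun j _ => h2 l hl j
      rw [e1, Finset.prod_div_distrib, Finset.prod_mul_distrib]
      have h1' : (∏ j : ZMod n, kappa n (x l) (x l') (j - 1)) =
          ∏ j : ZMod n, kappa n (x l) (x l') j := by
        have := hshift (-1) (fun j => kappa n (x l) (x l') j)
        simpa [sub_eq_add_neg] using this
      have h2' : (∏ j : ZMod n, x l (j - 1)) = ∏ j : ZMod n, x l j := by
        have := hshift (-1) (fun j => x l j)
        simpa [sub_eq_add_neg] using this
      rw [h1', h2', mul_div_assoc, div_self hκne, mul_one, pivar]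
    · intro k hk1 hk2
      rw [pivar, map_prod]
      exact Finset.prod_congr rfl fun j _ => h3 l hl k j hk1 hk2
  refine ⟨key, ?_⟩
  intro L
  induction L with
  | nil => intro i; simp
  | cons a L ih =>
    intro i
    simp only [List.foldr_cons, RingHom.comp_apply, List.map_cons, List.prod_cons,
      Equiv.Perm.mul_apply]
    rw [ih i]
    set k := ((L.map fun l => Equiv.swap l.1 ⟨(l.1 : ℕ) + 1, l.2⟩).prod) i with hk
    obtain ⟨hA, hB, hC⟩ := key a.1 a.2
    by_cases h1' : k = a.1
    · rw [h1', hA, Equiv.swap_apply_left]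
    · by_cases h2' : k = ⟨(a.1 : ℕ) + 1, a.2⟩
      · rw [h2', hB, Equiv.swap_apply_right]
      · rw [hC k h1' h2', Equiv.swap_apply_of_ne_of_ne h1' h2']
end

section
/- The loop power sum symmetric functions p_k(x_1,...,x_m) = Σ_{i=1}^m π_i^k = Σ_{i=1}^m (∏_{j=1}^n x_i^{(j)})^k are invariant under each birational map s_i, hence under the full birational S_m action. -/
open Finset

theorem Fintype.prod_shift_mul_div_eq {G K : Type*} [AddGroup G] [Fintype G] [CommGroupWithZero K]
    (b c : G → K) (hc : ∀ j, c j ≠ 0) (e : G) :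
    ∏ j, b (j + e) * c (j + e) / c j = ∏ j, b j := by
  have hshift : ∀ f : G → K, ∏ j, f (j + e) = ∏ j, f j := fun f =>
    Fintype.prod_equiv (Equiv.addRight e) _ _ fun _ => rfl
  rw [Finset.prod_div_distrib, Finset.prod_mul_distrib, hshift b, hshift c, mul_div_assoc,
    div_self (Finset.prod_ne_zero_iff.mpr fun j _ => hc j), mul_one]

theorem RingHom.map_sum_pow_eq_of_perm {ι R : Type*} [Fintype ι] [CommSemiring R]
    (σ : R →+* R) (f : ι → R) (e : Equiv.Perm ι) (k : ℕ) (hσ : ∀ i, σ (f i) = f (e i)) :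
    σ (∑ i, f i ^ k) = ∑ i, f i ^ k := by
  simp only [map_sum, map_pow, hσ]
  exact Equiv.sum_comp e (fun i => f i ^ k)

theorem List.foldr_comp_apply_eq_of_forall {ι R : Type*} [Semiring R] (σ : ι → R →+* R) (a : R)
    (hσ : ∀ l, σ l a = a) (L : List ι) :
    (L.foldr (fun l f => (σ l).comp f) (RingHom.id R)) a = a := by
  induction L with
  | nil => rfl
  | cons l L ih => rw [List.foldr_cons, RingHom.comp_apply, ih, hσ]

theorem statement13_general {K : Type*} [Field K] (m n : ℕ) [NeZero n] (k : ℕ)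
    (x : Fin m → ZMod n → K)
    (σ : (l : Fin m) → ((l : ℕ) + 1 < m) → (K →+* K))
    (hκ : ∀ (l : Fin m) (hl : (l : ℕ) + 1 < m) (r : ZMod n),
      kappa n (x l) (x ⟨(l : ℕ) + 1, hl⟩) r ≠ 0)
    (h1 : ∀ (l : Fin m) (hl : (l : ℕ) + 1 < m) (j : ZMod n),
      σ l hl (x l j) =
        x ⟨(l : ℕ) + 1, hl⟩ (j + 1) * kappa n (x l) (x ⟨(l : ℕ) + 1, hl⟩) (j + 1) /
          kappa n (x l) (x ⟨(l : ℕ) + 1, hl⟩) j)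
    (h2 : ∀ (l : Fin m) (hl : (l : ℕ) + 1 < m) (j : ZMod n),
      σ l hl (x ⟨(l : ℕ) + 1, hl⟩ j) =
        x l (j - 1) * kappa n (x l) (x ⟨(l : ℕ) + 1, hl⟩) (j - 1) /
          kappa n (x l) (x ⟨(l : ℕ) + 1, hl⟩) j)
    (h3 : ∀ (l : Fin m) (hl : (l : ℕ) + 1 < m) (kk : Fin m) (j : ZMod n),
      kk ≠ l → kk ≠ ⟨(l : ℕ) + 1, hl⟩ → σ l hl (x kk j) = x kk j) :
    (∀ (l : Fin m) (hl : (l : ℕ) + 1 < m),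
      σ l hl (∑ i : Fin m, pivar n (x i) ^ k) = ∑ i : Fin m, pivar n (x i) ^ k) ∧
    ∀ L : List {l : Fin m // (l : ℕ) + 1 < m},
      (L.foldr (fun l f => (σ l.1 l.2).comp f) (RingHom.id K))
          (∑ i : Fin m, pivar n (x i) ^ k) = ∑ i : Fin m, pivar n (x i) ^ k := by
  have hs : ∀ (l : Fin m) (hl : (l : ℕ) + 1 < m),
      σ l hl (∑ i : Fin m, pivar n (x i) ^ k) = ∑ i : Fin m, pivar n (x i) ^ k := by
    intro l hl
    -- `s_l` exchanges `π_l` and `π_{l+1}`: the `κ` factors telescope around the cycle `ZMod n`.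
    refine (σ l hl).map_sum_pow_eq_of_perm (fun i => pivar n (x i)) (Equiv.swap l ⟨l + 1, hl⟩) k
      fun i => ?_
    simp only [pivar, map_prod]
    by_cases hil : i = l
    · subst hil
      rw [Equiv.swap_apply_left]
      simp only [h1 i hl]
      exact Fintype.prod_shift_mul_div_eq _ _ (hκ i hl) 1
    by_cases hil' : i = ⟨l + 1, hl⟩
    · rw [hil', Equiv.swap_apply_right]
      simp only [h2 l hl, sub_eq_add_neg]
      exact Fintype.prod_shift_mul_div_eq _ _ (hκ l hl) (-1)
    rw [Equiv.swap_apply_of_ne_of_ne hil hil']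
    exact Finset.prod_congr rfl fun j _ => h3 l hl i j hil hil'
  exact ⟨hs, fun L =>
    L.foldr_comp_apply_eq_of_forall (fun l => σ l.1 l.2) _ fun l => hs l.1 l.2⟩

/-- The loop power sums `p_k = Σ_i π_i^k` are invariant under each birational map `s_i`,
hence under any composition of them (the full birational `S_m` action). -/
theorem statement13 {K : Type*} [Field K] (m n : ℕ) [NeZero n] (k : ℕ) (hk : 1 ≤ k)
    (x : Fin m → ZMod n → K)
    (σ : (l : Fin m) → ((l : ℕ) + 1 < m) → (K →+* K))
    (hκ : ∀ (l : Fin m) (hl : (l : ℕ) + 1 < m) (r : ZMod n),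
      kappa n (x l) (x ⟨(l : ℕ) + 1, hl⟩) r ≠ 0)
    (h1 : ∀ (l : Fin m) (hl : (l : ℕ) + 1 < m) (j : ZMod n),
      σ l hl (x l j) =
        x ⟨(l : ℕ) + 1, hl⟩ (j + 1) * kappa n (x l) (x ⟨(l : ℕ) + 1, hl⟩) (j + 1) /
          kappa n (x l) (x ⟨(l : ℕ) + 1, hl⟩) j)
    (h2 : ∀ (l : Fin m) (hl : (l : ℕ) + 1 < m) (j : ZMod n),
      σ l hl (x ⟨(l : ℕ) + 1, hl⟩ j) =
        x l (j - 1) * kappa n (x l) (x ⟨(l : ℕ) + 1, hl⟩) (j - 1) /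
          kappa n (x l) (x ⟨(l : ℕ) + 1, hl⟩) j)
    (h3 : ∀ (l : Fin m) (hl : (l : ℕ) + 1 < m) (kk : Fin m) (j : ZMod n),
      kk ≠ l → kk ≠ ⟨(l : ℕ) + 1, hl⟩ → σ l hl (x kk j) = x kk j) :
    (∀ (l : Fin m) (hl : (l : ℕ) + 1 < m),
      σ l hl (∑ i : Fin m, pivar n (x i) ^ k) = ∑ i : Fin m, pivar n (x i) ^ k) ∧
    ∀ L : List {l : Fin m // (l : ℕ) + 1 < m},
      (L.foldr (fun l f => (σ l.1 l.2).comp f) (RingHom.id K))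
          (∑ i : Fin m, pivar n (x i) ^ k) = ∑ i : Fin m, pivar n (x i) ^ k :=
  statement13_general m n k x σ hκ h1 h2 h3
end

section
/- Matrix identity underlying the alternants formula: H_{α}^{(r-m+1)} M^{(r)} = A_{α}^{(r)}, where for each i,j: Σ_{k=1}^m h_{α_i - m + k}^{(r - α_i + 1)} (-1)^{m-k} t_{j,m}(e_{m-k}^{(r+k+1-m)}[m]) = t_{j,m}( h_{α_i}^{(r-α_i+1)}(x_m) ), with [m] denoting loop elementary functions in x_1,...,x_{m-1} only and h(x_m) the loop homogeneous function in the single variable-block x_m. -/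
open Finset

/-!
Pulling `τ j` out (it fixes every `h`) and reversing the summation index, the `(i, j)` entry
becomes `τ j` applied to `Σ_k (-1)^k e_k[m]^{(ρ-k)} h_{a-k}^{(ρ-a)}` with `ρ = r + 1`, `a = α_i`.
Reading the `e`-word backwards followed by the `h`-word, this is a signed sum over words `g` of
length `a` with a split point `k`: before `k` the word is strictly decreasing and avoids the last
letter, from `k` on it is weakly increasing, and the monomial `∏ x_{g p}^{(ρ-1-p)}` depends on `g`
only. For a fixed word the admissible split points come in pairs `k, k + 1` (the boundary letter
moves across), except for the constant word on the last letter, which splits only at `0`; its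
monomial is `h_a^{(ρ-a)}(x_m)`.
-/

section

open scoped Classical

variable {K : Type*} [Field K] {n : ℕ}

lemma natCast_sub_one_sub {R : Type*} [Ring R] {k t : ℕ} (h : t < k) :
    ((k - 1 - t : ℕ) : R) = k - 1 - t := by
  rw [Nat.sub_sub, Nat.cast_sub (by omega), Nat.cast_add, Nat.cast_one, sub_sub]

def wordWeight {m a : ℕ} (x : Fin m → ZMod n → K) (ρ : ZMod n) (g : Fin a → Fin m) : K :=
  ∏ p, x (g p) (ρ - 1 - (p : ℕ))

lemma loopE_castSucc_eq_sum {m : ℕ} (x : Fin (m + 1) → ZMod n → K) (k : ℕ) (ρ : ZMod n) :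
    loopE m n (fun b => x b.castSucc) k (ρ - k) =
      ∑ u : Fin k → Fin (m + 1) with StrictAnti u ∧ ∀ t, u t ≠ Fin.last m, wordWeight x ρ u := by
  refine Finset.sum_bij' (fun f _ t => (f t.rev).castSucc)
    (fun u hu t => (u t.rev).castPred ((Finset.mem_filter.mp hu).2.2 _)) ?_ ?_ ?_ ?_ ?_
  · intro f hf
    simp only [Finset.mem_filter, Finset.mem_univ, true_and] at hf ⊢
    exact ⟨fun p q hpq => Fin.castSucc_lt_castSucc_iff.mpr (hf _ _ (Fin.rev_lt_rev.mpr hpq)),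
      fun t => (Fin.castSucc_lt_last _).ne⟩
  · intro u hu
    simp only [Finset.mem_filter, Finset.mem_univ, true_and] at hu ⊢
    intro p q hpq
    rw [← Fin.castSucc_lt_castSucc_iff, Fin.castSucc_castPred, Fin.castSucc_castPred]
    exact hu.1 (Fin.rev_lt_rev.mpr hpq)
  · intro f _
    funext t
    simp
  · intro u _
    funext t
    simp
  · intro f _
    rw [wordWeight]
    refine Fintype.prod_equiv Fin.revPerm _ _ fun t => ?_
    simp only [Fin.revPerm_apply, Fin.rev_rev, Fin.val_rev]
    rw [Nat.cast_sub (by omega : (t : ℕ) + 1 ≤ k)]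
    push_cast
    ring_nf

lemma loopH_eq_sum {m : ℕ} (x : Fin m → ZMod n → K) (l : ℕ) (ρ : ZMod n) :
    loopH m n x l (ρ - l) = ∑ v : Fin l → Fin m with Monotone v, wordWeight x ρ v := by
  refine Finset.sum_congr
    (Finset.filter_congr fun v _ => ⟨fun h p q => h p q, fun h p q => @h p q⟩)
    fun v _ => Finset.prod_congr rfl fun t _ => ?_
  rw [natCast_sub_one_sub t.isLt]
  congr 1
  ring

structure IsSplitAt {m a : ℕ} (k : ℕ) (g : Fin a → Fin (m + 1)) : Prop where
  strictAnti : ∀ ⦃p q : Fin a⦄, p < q → (q : ℕ) < k → g q < g p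
  ne_last : ∀ p : Fin a, (p : ℕ) < k → g p ≠ Fin.last m
  monotone : ∀ ⦃p q : Fin a⦄, k ≤ (p : ℕ) → p ≤ q → g p ≤ g q

lemma isSplitAt_append_iff {m k l : ℕ} (u : Fin k → Fin (m + 1)) (v : Fin l → Fin (m + 1)) :
    IsSplitAt k (Fin.append u v) ↔ (StrictAnti u ∧ ∀ t, u t ≠ Fin.last m) ∧ Monotone v := by
  constructor
  · intro h
    refine ⟨⟨fun p q hpq => ?_, fun t => ?_⟩, fun p q hpq => ?_⟩
    · simpa using h.strictAnti ((Fin.strictMono_castAdd l).lt_iff_lt.mpr hpq) (by simp)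
    · simpa using h.ne_last (Fin.castAdd l t) (by simp)
    · simpa using h.monotone (p := Fin.natAdd k p) (q := Fin.natAdd k q) (by simp)
        ((Fin.natAdd_le_natAdd_iff k).mpr hpq)
  · rintro ⟨⟨hu, hne⟩, hv⟩
    refine ⟨fun p q hpq hq => ?_, fun p hp => ?_, fun p q hp hpq => ?_⟩
    · induction q using Fin.addCases with
      | right q => simp at hq
      | left q =>
        induction p using Fin.addCases with
        | right p => rw [Fin.lt_def, Fin.val_natAdd, Fin.val_castAdd] at hpq; omega
        | left p => simpa using hu ((Fin.strictMono_castAdd l).lt_iff_lt.mp hpq)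
    · induction p using Fin.addCases with
      | right p => simp at hp
      | left p => simpa using hne p
    · induction p using Fin.addCases with
      | left p => rw [Fin.val_castAdd] at hp; omega
      | right p =>
        induction q using Fin.addCases with
        | left q => rw [Fin.le_def, Fin.val_natAdd, Fin.val_castAdd] at hpq; omega
        | right q => simpa using hv ((Fin.natAdd_le_natAdd_iff k).mp hpq)

lemma wordWeight_append {m k l : ℕ} (x : Fin m → ZMod n → K) (ρ : ZMod n)
    (u : Fin k → Fin m) (v : Fin l → Fin m) :
    wordWeight x ρ (Fin.append u v) = wordWeight x ρ u * wordWeight x (ρ - k) v := by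
  simp only [wordWeight, Fin.prod_univ_add, Fin.append_left, Fin.append_right, Fin.val_castAdd,
    Fin.val_natAdd]
  congr 1
  refine Finset.prod_congr rfl fun t _ => ?_
  push_cast
  ring_nf

lemma loopE_mul_loopH_eq_sum_isSplitAt {m a k : ℕ} (hk : k ≤ a) (x : Fin (m + 1) → ZMod n → K)
    (ρ : ZMod n) :
    loopE m n (fun b => x b.castSucc) k (ρ - k) * loopH (m + 1) n x (a - k) (ρ - a) =
      ∑ g : Fin a → Fin (m + 1) with IsSplitAt k g, wordWeight x ρ g := by
  obtain ⟨l, rfl⟩ := Nat.exists_eq_add_of_le hk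
  rw [Nat.add_sub_cancel_left, loopE_castSucc_eq_sum,
    show ρ - ((k + l : ℕ) : ZMod n) = ρ - k - l by push_cast; ring, loopH_eq_sum,
    Finset.sum_mul_sum, ← Finset.sum_product']
  refine Finset.sum_equiv (Fin.appendEquiv k l) (fun ⟨u, v⟩ => ?_) (fun ⟨u, v⟩ _ => ?_)
  · simp only [Finset.mem_product, Finset.mem_filter, Finset.mem_univ, true_and]
    exact (isSplitAt_append_iff u v).symm
  · exact (wordWeight_append x ρ u v).symm

namespace IsSplitAt

variable {m a k : ℕ} {g : Fin a → Fin (m + 1)}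

lemma not_add_two (h : IsSplitAt k g) (h₂ : IsSplitAt (k + 2) g) (hk : k + 2 ≤ a) : False :=
  (h.monotone (p := ⟨k, by omega⟩) (q := ⟨k + 1, by omega⟩) le_rfl
    (Fin.mk_le_mk.mpr (by omega))).not_gt (h₂.strictAnti (Fin.mk_lt_mk.mpr (by omega)) (by simp))

lemma of_succ (h : IsSplitAt (k + 1) g) (hle : ∀ hk : k + 1 < a, g ⟨k, by omega⟩ ≤ g ⟨k + 1, hk⟩) :
    IsSplitAt k g where
  strictAnti _ _ hpq hq := h.strictAnti hpq (by omega)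
  ne_last p hp := h.ne_last p (by omega)
  monotone p q hp hpq := by
    rcases (show k + 1 ≤ (p : ℕ) ∨ (p : ℕ) = k by omega) with hp' | hpk
    · exact h.monotone hp' hpq
    have hka : k < a := hpk ▸ p.isLt
    obtain rfl : p = ⟨k, hka⟩ := Fin.ext hpk
    rcases eq_or_lt_of_le hpq with rfl | hpq'
    · exact le_rfl
    rw [Fin.lt_def] at hpq'
    exact (hle (by omega)).trans (h.monotone le_rfl (Fin.le_def.mpr hpq'))

lemma succ (h : IsSplitAt k g) (hk : k < a) (hlt : ∀ p : Fin a, (p : ℕ) < k → g ⟨k, hk⟩ < g p)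
    (hne : g ⟨k, hk⟩ ≠ Fin.last m) : IsSplitAt (k + 1) g where
  strictAnti p q hpq hq := by
    rcases (show (q : ℕ) < k ∨ (q : ℕ) = k by omega) with hq' | hqk
    · exact h.strictAnti hpq hq'
    obtain rfl : q = ⟨k, hk⟩ := Fin.ext hqk
    exact hlt p hpq
  ne_last p hp := by
    rcases (show (p : ℕ) < k ∨ (p : ℕ) = k by omega) with hp' | hpk
    · exact h.ne_last p hp'
    obtain rfl : p = ⟨k, hk⟩ := Fin.ext hpk
    exact hne
  monotone _ _ hp hpq := h.monotone (by omega) hpq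

lemma succ_of_not_pred (h : IsSplitAt k g) (hpred : ¬(0 < k ∧ IsSplitAt (k - 1) g))
    (hg : g ≠ fun _ => Fin.last m) : k < a ∧ IsSplitAt (k + 1) g := by
  cases k with
  | zero =>
    have ha : 0 < a := Nat.pos_of_ne_zero fun ha => hg (funext fun p => absurd p.isLt (by omega))
    have hne : g ⟨0, ha⟩ ≠ Fin.last m := fun h₀ => hg <| funext fun q =>
      le_antisymm (Fin.le_last _) (h₀ ▸ h.monotone le_rfl (Fin.le_def.mpr (Nat.zero_le _)))
    exact ⟨ha, h.succ ha (fun _ hp => absurd hp (Nat.not_lt_zero _)) hne⟩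
  | succ k =>
    have hpred : ¬IsSplitAt k g := fun h' => hpred ⟨k.succ_pos, h'⟩
    obtain ⟨hk, hlt⟩ : ∃ hk : k + 1 < a, g ⟨k + 1, hk⟩ < g ⟨k, by omega⟩ := by
      by_contra! hc
      exact hpred (h.of_succ hc)
    refine ⟨hk, h.succ hk (fun p hp => hlt.trans_le ?_) (hlt.trans_le (Fin.le_last _)).ne⟩
    rcases (show (p : ℕ) < k ∨ (p : ℕ) = k by omega) with hp' | hpk
    · exact (h.strictAnti (Fin.lt_def.mpr hp') (by simp)).le
    · exact le_of_eq (congrArg g (Fin.ext hpk.symm))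

end IsSplitAt

lemma sum_sign_isSplitAt {R : Type*} [Ring R] {m a : ℕ} (g : Fin a → Fin (m + 1)) :
    ∑ k ∈ Finset.range (a + 1) with IsSplitAt k g, (-1 : R) ^ k =
      if g = (fun _ => Fin.last m) then 1 else 0 := by
  split_ifs with hg
  · subst hg
    suffices h : (Finset.range (a + 1)).filter (IsSplitAt · fun _ => Fin.last m) = {0} by
      rw [h, Finset.sum_singleton, pow_zero]
    ext k
    simp only [Finset.mem_filter, Finset.mem_range, Finset.mem_singleton]
    refine ⟨fun ⟨hk, h⟩ => Nat.eq_zero_of_not_pos fun hk₀ => h.ne_last ⟨0, by omega⟩ hk₀ rfl,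
      fun hk => hk ▸ ⟨Nat.succ_pos a, fun _ _ _ hq => absurd hq (Nat.not_lt_zero _),
        fun _ hp => absurd hp (Nat.not_lt_zero _), fun _ _ _ _ => le_rfl⟩⟩
  refine Finset.sum_involution (fun k _ => if 0 < k ∧ IsSplitAt (k - 1) g then k - 1 else k + 1)
    (fun k _ => ?_) (fun k _ _ => ?_) (fun k hk => ?_) (fun k hk => ?_)
  · split_ifs with hc
    · obtain ⟨j, rfl⟩ := Nat.exists_eq_add_of_lt hc.1
      simp [pow_succ]
    · simp [pow_succ]
  · split_ifs with hc <;> omega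
  · simp only [Finset.mem_filter, Finset.mem_range] at hk ⊢
    split_ifs with hc
    · exact ⟨by omega, hc.2⟩
    · obtain ⟨hka, hsucc⟩ := hk.2.succ_of_not_pred hc hg
      exact ⟨by omega, hsucc⟩
  · simp only [Finset.mem_filter, Finset.mem_range] at hk
    by_cases hc : 0 < k ∧ IsSplitAt (k - 1) g
    · have hc' : ¬(0 < k - 1 ∧ IsSplitAt (k - 1 - 1) g) := fun hc' => by
        obtain ⟨j, rfl⟩ := Nat.exists_eq_add_of_le (show 2 ≤ k by omega)
        exact hc'.2.not_add_two (by simpa [add_comm] using hk.2) (by omega)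
      simp only [if_pos hc, if_neg hc']
      omega
    · have hc' : 0 < k + 1 ∧ IsSplitAt k g := ⟨k.succ_pos, hk.2⟩
      simp only [if_neg hc, Nat.add_sub_cancel, if_pos hc']

lemma wordWeight_const {m a : ℕ} (x : Fin m → ZMod n → K) (ρ : ZMod n) (c : Fin m) :
    wordWeight x ρ (fun _ : Fin a => c) = singleH n (x c) a (ρ - a) := by
  rw [wordWeight, singleH, Fin.prod_univ_eq_prod_range (fun p => x c (ρ - 1 - p)),
    ← Finset.prod_range_reflect]
  refine Finset.prod_congr rfl fun s hs => ?_
  rw [natCast_sub_one_sub (Finset.mem_range.mp hs)]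
  ring_nf

lemma sum_range_loopE_mul_loopH {m : ℕ} (x : Fin (m + 1) → ZMod n → K) (a : ℕ) (ρ : ZMod n) :
    ∑ k ∈ Finset.range (a + 1), (-1 : K) ^ k *
        (loopE m n (fun b => x b.castSucc) k (ρ - k) * loopH (m + 1) n x (a - k) (ρ - a)) =
      singleH n (x (Fin.last m)) a (ρ - a) := by
  calc _ = ∑ k ∈ Finset.range (a + 1), ∑ g : Fin a → Fin (m + 1) with IsSplitAt k g,
        (-1 : K) ^ k * wordWeight x ρ g := by
        refine Finset.sum_congr rfl fun k hk => ?_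
        rw [loopE_mul_loopH_eq_sum_isSplitAt (Nat.lt_succ_iff.mp (Finset.mem_range.mp hk)),
          Finset.mul_sum]
    _ = ∑ g : Fin a → Fin (m + 1), wordWeight x ρ g *
        ∑ k ∈ Finset.range (a + 1) with IsSplitAt k g, (-1 : K) ^ k := by
        rw [Finset.sum_comm' (t' := Finset.univ) (s' := fun g => (Finset.range (a + 1)).filter
          (IsSplitAt · g)) (by simp)]
        simp only [Finset.mul_sum, mul_comm]
    _ = wordWeight x ρ (fun _ => Fin.last m) := by
        simp_rw [sum_sign_isSplitAt, mul_ite, mul_one, mul_zero]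
        rw [Finset.sum_ite_eq', if_pos (Finset.mem_univ _)]
    _ = _ := wordWeight_const x ρ _

lemma loopE_eq_zero_of_lt {m k : ℕ} (x : Fin m → ZMod n → K) (h : m < k) (r : ZMod n) :
    loopE m n x k r = 0 := by
  refine Finset.sum_eq_zero fun f hf => absurd h (not_lt.mpr ?_)
  have hf : StrictMono f := fun p q => (Finset.mem_filter.mp hf).2 p q
  simpa using Fintype.card_le_of_injective f hf.injective

lemma sum_range_mul_loopHZ_eq_loopH {m M : ℕ} (x : Fin M → ZMod n → K) (E : ℕ → K)
    (hE : ∀ k, m < k → E k = 0) (a : ℕ) (ρ : ZMod n) :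
    ∑ k ∈ Finset.range (m + 1), (-1 : K) ^ k * (E k * loopHZ M n x ((a : ℤ) - k) ρ) =
      ∑ k ∈ Finset.range (a + 1), (-1 : K) ^ k * (E k * loopH M n x (a - k) ρ) := by
  have hHZ : ∀ k ∈ Finset.range (a + 1),
      loopHZ M n x ((a : ℤ) - k) ρ = loopH M n x (a - k) ρ := by
    intro k hk
    rw [loopHZ, if_neg (by simp at hk; omega)]
    congr
    omega
  calc _ = ∑ k ∈ Finset.range (m + a + 1),
          (-1 : K) ^ k * (E k * loopHZ M n x ((a : ℤ) - k) ρ) :=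
        Finset.sum_subset (Finset.range_subset_range.mpr (by omega)) fun k _ hk => by
          rw [hE k (by simp at hk; omega), zero_mul, mul_zero]
    _ = ∑ k ∈ Finset.range (a + 1), (-1 : K) ^ k * (E k * loopHZ M n x ((a : ℤ) - k) ρ) :=
        (Finset.sum_subset (Finset.range_subset_range.mpr (by omega)) fun k _ hk => by
          rw [loopHZ, if_pos (by simp at hk; omega), mul_zero, mul_zero]).symm
    _ = _ := Finset.sum_congr rfl fun k hk => by rw [hHZ k hk]

end

/-- `τ j` plays the role of `t_{j,m}`; the indices `i, j` are 0-based. -/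
theorem statement16 {K : Type*} [Field K] (m n : ℕ) (hm : 1 ≤ m)
    (x : Fin m → ZMod n → K)
    (τ : Fin m → (K →+* K))
    (hτh : ∀ (j : Fin m) (k : ℕ) (c : ZMod n), τ j (loopH m n x k c) = loopH m n x k c)
    (α : Fin m → ℕ) (r : ZMod n) :
    (Matrix.of fun i j : Fin m =>
        loopHZ m n x ((α i : ℤ) - (m : ℤ) + (j : ℕ) + 1)
          (r - (α i : ZMod n) + 1)) *
      (Matrix.of fun i j : Fin m =>
        (-1 : K) ^ (m - 1 - (i : ℕ)) *
          τ j (loopE (m - 1) n (fun b => x (Fin.castLE (Nat.sub_le m 1) b))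
            (m - 1 - (i : ℕ)) (r + ((i : ℕ) : ZMod n) + 2 - (m : ZMod n)))) =
    Matrix.of fun i j : Fin m =>
      τ j (singleH n (x ⟨m - 1, by omega⟩) (α i) (r - (α i : ZMod n) + 1)) := by
  obtain ⟨m, rfl⟩ := Nat.exists_add_one_eq.mpr hm
  ext i j
  have hτ (z : ℤ) (c : ZMod n) : τ j (loopHZ (m + 1) n x z c) = loopHZ (m + 1) n x z c := by
    unfold loopHZ
    split_ifs
    exacts [map_zero _, hτh j _ _]
  simp only [Matrix.mul_apply, Matrix.of_apply]
  rw [show r - α i + 1 = r + 1 - α i by ring,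
    show (⟨m + 1 - 1, by omega⟩ : Fin (m + 1)) = Fin.last m from rfl,
    ← sum_range_loopE_mul_loopH,
    ← sum_range_mul_loopHZ_eq_loopH _ _ (fun k hk => loopE_eq_zero_of_lt _ hk _), map_sum,
    Finset.sum_range]
  refine Fintype.sum_equiv Fin.revPerm _ _ fun t => ?_
  have ht : m + 1 - 1 - (t : ℕ) = m - t := by omega
  have hcolor : r + ((t : ℕ) : ZMod n) + 2 - ((m + 1 : ℕ) : ZMod n) =
      r + 1 - ((m - t : ℕ) : ZMod n) := by
    rw [Nat.cast_sub (by omega)]; push_cast; ring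
  have hdeg : (α i : ℤ) - ((m + 1 : ℕ) : ℤ) + (t : ℕ) + 1 = α i - ((m - t : ℕ) : ℤ) := by
    rw [Nat.cast_sub (by omega)]; push_cast; ring
  simp only [Fin.revPerm_apply, Fin.val_rev, map_mul, map_pow, map_neg, map_one,
    hτ, ht, hcolor, hdeg, show m + 1 - ((t : ℕ) + 1) = m - t by omega]
  rw [mul_left_comm, mul_comm (loopHZ _ _ _ _ _)]
  rfl
end
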